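/- arXiv:0810.4450 — 2 statements merged into one kernel-verified Lean document; each statement's English description precedes it below -/
import Mathlib

section
/- Let S be a commutative ring and Ch(S) the category of nonnegatively graded chain complexes of S-modules, with generating cofibrations J the boundary inclusions ∂_i → 2_i for i ∈ ℕ. For a chain complex X, define a chain complex QX, free in every dimension, with: generators [x] of (QX)_0 for x ∈ X_0, with ε_0([x]) = x; and generators [x, z] of (QX)_{i+1} for x ∈ X_{i+1} and z a cycle of (QX)_i with ε_i(z) = d_{i+1}(x), with ε_{i+1}([x,z]) = x and differential d_{i+1}([x,z]) = z. Then ε_X : QX → X is the universal cofibrant replacement of X with respect to J: equipped with the choice of liftings given by inclusion of generators, it is an initial object of AAF/X. -/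
/-!
STATEMENT 5: For a commutative ring `S` and the category `Ch(S)` of
nonnegatively graded chain complexes of `S`-modules with generating
cofibrations the boundary inclusions `∂_i → 2_i`, the complex `QX` (free in
every dimension, on generators `[x]` in dimension 0 and `[x, z]` in dimension
`i+1`, with `ε[x] = x`, `ε[x,z] = x`, `d[x,z] = z`) is the universal cofibrant
replacement of `X`: equipped with the choice of liftings given by inclusion of
generators, `ε_X : QX → X` is an initial object of `AAF/X`.
-/

open CategoryTheory Limits

universe u

namespace Statement5

variable (S : Type) [CommRing S]

/-- The category `Ch(S)` of nonnegatively graded chain complexes of `S`-modules. -/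
abbrev Ch := ChainComplex (ModuleCat.{0} S) ℕ

/-! ## The disc and boundary complexes and the generating cofibrations -/

/-- The components of the disc complex `2_i`: `S` in degrees `i` and `i-1`. -/
def dObj (i n : ℕ) : ModuleCat.{0} S :=
  if n = i ∨ n + 1 = i then ModuleCat.of S S else ModuleCat.of S PUnit

/-- The differential of `2_i` (the identity of `S`, from degree `i` to `i-1`). -/
def dD (i n : ℕ) : dObj S i (n + 1) ⟶ dObj S i n :=
  if h : n + 1 = i then eqToHom (by simp [dObj, h]) else 0

/-- The disc complex `2_i`. -/
noncomputable def disc (i : ℕ) : Ch S :=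
  ChainComplex.of (dObj S i) (dD S i)
    (by
      intro n
      unfold dD
      by_cases h : n + 1 = i
      · have h2 : ¬(n + 1 + 1 = i) := by omega
        rw [dif_neg h2, zero_comp]
      · rw [dif_neg h, comp_zero])

/-- The components of the boundary complex `∂_i`: `S` in degree `i-1`. -/
def bObj (i n : ℕ) : ModuleCat.{0} S :=
  if n + 1 = i then ModuleCat.of S S else ModuleCat.of S PUnit

/-- The boundary complex `∂_i` (with zero differential). -/
noncomputable def bdry (i : ℕ) : Ch S :=
  ChainComplex.of (bObj S i) (fun _ => 0) (by intro n; rw [zero_comp])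

/-- The components of the boundary inclusion. -/
def inclApp (i n : ℕ) : bObj S i n ⟶ dObj S i n :=
  if h : n + 1 = i then eqToHom (by simp [bObj, dObj, h]) else 0

/-- The generating cofibration `ι_i : ∂_i ⟶ 2_i`. -/
noncomputable def incl (i : ℕ) : bdry S i ⟶ disc S i :=
  ChainComplex.ofHom (X := bdry S i) (Y := disc S i) (inclApp S i)
    (by
      intro n
      show inclApp S i (n + 1) ≫ ChainComplex.of.d _ (dD S i) (n + 1) n
        = ChainComplex.of.d _ (fun _ => (0 : bObj S i (_ + 1) ⟶ bObj S i _)) (n + 1) n ≫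
          inclApp S i n
      rw [ChainComplex.of_d, ChainComplex.of_d]
      unfold inclApp dD
      by_cases h : n + 1 = i
      · have h2 : ¬(n + 1 + 1 = i) := by omega
        rw [dif_neg h2, zero_comp, zero_comp]
      · rw [dif_neg h, comp_zero, zero_comp])

/-! ## The universal cofibrant replacement `QX` -/

variable (X : Ch S)

/-- Data of level `i` of the construction of `QX`: the set `G` of free
generators of `(QX)_i`, the counit `ε_i : (QX)_i = (G →₀ S) → X_i`, and the
submodule of cycles `Z(QX)_i`. -/
structure QLevel (i : ℕ) : Type 1 where
  G : Type
  eps : (G →₀ S) →ₗ[S] X.X i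
  Z : Submodule S (G →₀ S)

/-- The recursive construction of the levels of `QX`:
* `(QX)_0` is free on generators `[x]` for `x ∈ X_0`, with `ε_0 [x] = x` (and
  every `0`-chain a cycle);
* `(QX)_{i+1}` is free on generators `[x, z]` for `x ∈ X_{i+1}` and
  `z ∈ Z(QX)_i` with `ε_i z = d_{i+1} x`, with `ε_{i+1} [x, z] = x` and with the
  cycles `Z(QX)_{i+1}` the kernel of the differential `d_{i+1} : [x, z] ↦ z`. -/
noncomputable def qStep : ∀ i : ℕ, QLevel S X i
  | 0 =>
    { G := X.X 0
      eps := Finsupp.linearCombination S (id : (X.X 0 : Type) → X.X 0)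
      Z := ⊤ }
  | (i + 1) =>
    let p := qStep i
    { G := {q : (X.X (i + 1) : Type) × p.Z // p.eps q.2.1 = X.d (i + 1) i q.1}
      eps := Finsupp.linearCombination S (fun g => g.1.1)
      Z := LinearMap.ker
        (Finsupp.linearCombination S (fun g : {q : (X.X (i + 1) : Type) × p.Z //
          p.eps q.2.1 = X.d (i + 1) i q.1} => (g.1.2.1 : p.G →₀ S))) }

/-- The generators of `(QX)_i`. -/
noncomputable def QGen (i : ℕ) : Type := (qStep S X i).G

/-- Destructor for generators of `(QX)_{i+1}`. -/
noncomputable def qDestruct (i : ℕ) (g : QGen S X (i + 1)) :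
    {q : (X.X (i + 1) : Type) × (qStep S X i).Z //
      (qStep S X i).eps q.2.1 = X.d (i + 1) i q.1} := g

/-- The generator `[x, z]` of `(QX)_{i+1}`. -/
noncomputable def qGenMk (i : ℕ) (x : X.X (i + 1)) (z : (qStep S X i).Z)
    (h : (qStep S X i).eps z.1 = X.d (i + 1) i x) : QGen S X (i + 1) :=
  show {q : (X.X (i + 1) : Type) × (qStep S X i).Z //
      (qStep S X i).eps q.2.1 = X.d (i + 1) i q.1} from ⟨(x, z), h⟩

/-- The differential of `QX`: `d_{i+1} [x, z] = z`. -/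
noncomputable def Qd (i : ℕ) : (QGen S X (i + 1) →₀ S) →ₗ[S] (QGen S X i →₀ S) :=
  Finsupp.linearCombination S (fun g => (qDestruct S X i g).1.2.1)

theorem qZ_succ (i : ℕ) : (qStep S X (i + 1)).Z = LinearMap.ker (Qd S X i) := rfl

theorem mem_qZ_zero (v : QGen S X 0 →₀ S) : v ∈ (qStep S X 0).Z :=
  trivial

theorem mem_qZ_succ (i : ℕ) (v : QGen S X (i + 1) →₀ S) (hv : Qd S X i v = 0) :
    v ∈ (qStep S X (i + 1)).Z := by
  rw [qZ_succ]; exact LinearMap.mem_ker.mpr hv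

theorem Qd_single (i : ℕ) (g : QGen S X (i + 1)) (b : S) :
    Qd S X i (Finsupp.single g b) = b • (qDestruct S X i g).1.2.1 := by
  show Finsupp.linearCombination S (fun g => (qDestruct S X i g).1.2.1)
      (Finsupp.single g b) = _
  rw [Finsupp.linearCombination_single]

theorem Qd_comp (i : ℕ) : (Qd S X i).comp (Qd S X (i + 1)) = 0 := by
  apply Finsupp.lhom_ext
  intro g b
  show Qd S X i (Qd S X (i + 1) (Finsupp.single g b)) = 0
  rw [Qd_single]
  erw [map_smul]
  have hz2 : Qd S X i ((qDestruct S X (i + 1) g)).1.2.1 = 0 :=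
    LinearMap.mem_ker.mp (by exact (qDestruct S X (i + 1) g).1.2.2)
  rw [hz2, smul_zero]

/-- The chain complex `QX`: free in every dimension on the generators above. -/
noncomputable def Qc : Ch S :=
  ChainComplex.of (fun i => ModuleCat.of S (QGen S X i →₀ S))
    (fun i => ModuleCat.ofHom (Qd S X i))
    (fun n => ModuleCat.hom_ext (Qd_comp S X n))

theorem Qc_d (j : ℕ) (v : QGen S X (j + 1) →₀ S) :
    (Qc S X).d (j + 1) j v = Qd S X j v :=
  by
    have e : (Qc S X).d (j + 1) j = ModuleCat.ofHom (Qd S X j) :=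
      ChainComplex.of_d (fun i => ModuleCat.of S (QGen S X i →₀ S)) (fun i => ModuleCat.ofHom (Qd S X i)) j
    rw [e]; rfl

theorem eps_single (j : ℕ) (g : QGen S X (j + 1)) (b : S) :
    (qStep S X (j + 1)).eps (Finsupp.single g b) = b • (qDestruct S X j g).1.1 := by
  show Finsupp.linearCombination S _ (Finsupp.single g b) = _
  erw [Finsupp.linearCombination_single]
  rfl

/-- The counit `ε_X : QX ⟶ X`. -/
noncomputable def Qeps : Qc S X ⟶ X where
  f i := ModuleCat.ofHom (X := QGen S X i →₀ S) (Y := X.X i) (qStep S X i).eps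
  comm' := by
    rintro i j hij
    obtain rfl : j + 1 = i := hij
    refine ModuleCat.hom_ext (Finsupp.lhom_ext fun g b => ?_)
    show X.d (j + 1) j ((qStep S X (j + 1)).eps (Finsupp.single g b))
        = (qStep S X j).eps ((Qc S X).d (j + 1) j (Finsupp.single g b))
    rw [eps_single, Qc_d, Qd_single, map_smul, map_smul, (qDestruct S X j g).2]


/-! ## Choices of liftings and the canonical (inclusion-of-generators) liftings -/

/-- A choice of liftings for a chain map `f : Y ⟶ Z` with respect to the
generating cofibrations `ι_i : ∂_i → 2_i`: an assignment of chosen diagonal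
fillers for all commutative squares.  The pair `(f, φ)` is an object of
`AAF/Z`. -/
structure ChLiftChoice {Y Z : Ch S} (f : Y ⟶ Z) : Type where
  lift : ∀ (i : ℕ) (h : bdry S i ⟶ Y) (k : disc S i ⟶ Z),
    h ≫ f = incl S i ≫ k → (disc S i ⟶ Y)
  fac_left : ∀ (i : ℕ) (h : bdry S i ⟶ Y) (k : disc S i ⟶ Z)
      (w : h ≫ f = incl S i ≫ k), incl S i ≫ lift i h k w = h
  fac_right : ∀ (i : ℕ) (h : bdry S i ⟶ Y) (k : disc S i ⟶ Z)
      (w : h ≫ f = incl S i ≫ k), lift i h k w ≫ f = k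

/-- The composite choice of liftings `(φ • ψ)(j, h, k) = φ(j, h, ψ(j, f∘h, k))`
on a composite `f ≫ g`. -/
noncomputable def ChLiftChoice.comp {A B C : Ch S} {f : A ⟶ B} {g : B ⟶ C}
    (φ : ChLiftChoice S f) (ψ : ChLiftChoice S g) : ChLiftChoice S (f ≫ g) where
  lift i h k w :=
    φ.lift i h (ψ.lift i (h ≫ f) k (by rw [Category.assoc]; exact w))
      ((ψ.fac_left i (h ≫ f) k _).symm)
  fac_left i h k w := φ.fac_left i h _ _
  fac_right i h k w := by
    rw [← Category.assoc, φ.fac_right, ψ.fac_right]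

/-- The element `1 ∈ S`, placed in the top level of the disc complex. -/
noncomputable def discOneMap (i : ℕ) : ModuleCat.of S S ⟶ (disc S i).X i :=
  eqToHom (show ModuleCat.of S S = dObj S i i by simp [dObj])

/-- The canonical generator `1 ∈ S` of the top level of the disc complex. -/
noncomputable def discOne (i : ℕ) : ((disc S i).X i : Type) := discOneMap S i (1 : S)

/-- The element `1 ∈ S`, placed in degree `i` of the boundary complex `∂_{i+1}`. -/
noncomputable def bdryOneMap (i : ℕ) : ModuleCat.of S S ⟶ (bdry S (i + 1)).X i :=
  eqToHom (show ModuleCat.of S S = bObj S (i + 1) i by simp [bObj])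

/-- The canonical generator `1 ∈ S` of the boundary complex `∂_{i+1}` in
degree `i`. -/
noncomputable def bdryOne (i : ℕ) : ((bdry S (i + 1)).X i : Type) :=
  bdryOneMap S i (1 : S)

theorem incl_one_map_eq (i : ℕ) :
    bdryOneMap S i ≫ (incl S (i + 1)).f i
      = discOneMap S (i + 1) ≫ (disc S (i + 1)).d (i + 1) i := by
  have e1 : (incl S (i + 1)).f i = inclApp S (i + 1) i := rfl
  have e2 : (disc S (i + 1)).d (i + 1) i = dD S (i + 1) i :=
    ChainComplex.of_d _ _ i
  rw [e1, e2]
  unfold inclApp dD bdryOneMap discOneMap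
  rw [dif_pos rfl, dif_pos rfl]
  erw [eqToHom_trans, eqToHom_trans]

theorem incl_one_eq_d_one (i : ℕ) :
    (incl S (i + 1)).f i (bdryOne S i)
      = (disc S (i + 1)).d (i + 1) i (discOne S (i + 1)) :=
  ConcreteCategory.congr_hom (incl_one_map_eq S i) (1 : S)

variable (X : Ch S)

theorem bdryCycleMem (i : ℕ) (h : bdry S (i + 1) ⟶ Qc S X) :
    h.f i (bdryOne S i) ∈ (qStep S X i).Z := by
  cases i with
  | zero => exact mem_qZ_zero S X _
  | succ j =>
    apply mem_qZ_succ
    have hz : (bdry S (j + 1 + 1)).d (j + 1) j = 0 :=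
      ChainComplex.of_d (bObj S (j + 1 + 1)) (fun _ => 0) j
    have hone : ((bdry S (j + 1 + 1)).d (j + 1) j) (bdryOne S (j + 1)) = (0 : _) := by
      rw [hz]; rfl
    have hc := ConcreteCategory.congr_hom (h.comm (j + 1) j) (bdryOne S (j + 1))
    have hc' : (Qc S X).d (j + 1) j (h.f (j + 1) (bdryOne S (j + 1)))
        = h.f j (((bdry S (j + 1 + 1)).d (j + 1) j) (bdryOne S (j + 1))) := hc
    erw [← Qc_d]
    rw [hc', hone, map_zero]
    rfl

theorem canon_compat (i : ℕ) (h : bdry S (i + 1) ⟶ Qc S X) (k : disc S (i + 1) ⟶ X)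
    (w : h ≫ Qeps S X = incl S (i + 1) ≫ k) :
    (qStep S X i).eps (h.f i (bdryOne S i)) = X.d (i + 1) i (k.f (i + 1) (discOne S (i + 1))) := by
  have hcomp := congrArg (fun m => HomologicalComplex.Hom.f m i) w
  simp only [HomologicalComplex.comp_f] at hcomp
  have hw : (qStep S X i).eps (h.f i (bdryOne S i))
      = k.f i ((incl S (i + 1)).f i (bdryOne S i)) :=
    ConcreteCategory.congr_hom hcomp (bdryOne S i)
  have hk : X.d (i + 1) i (k.f (i + 1) (discOne S (i + 1)))
      = k.f i ((disc S (i + 1)).d (i + 1) i (discOne S (i + 1))) :=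
    ConcreteCategory.congr_hom (k.comm (i + 1) i) (discOne S (i + 1))
  rw [hw, incl_one_eq_d_one, ← hk]

/-- The canonical generator associated to a lifting problem against `ε_X`:
`[x]` in dimension `0` and `[x, z]` in dimension `i + 1`, where `x` is
classified by `k` and `z` by `h`. -/
noncomputable def canonGen : ∀ (i : ℕ) (h : bdry S i ⟶ Qc S X) (k : disc S i ⟶ X),
    h ≫ Qeps S X = incl S i ≫ k → QGen S X i
  | 0, _, k, _ => show (qStep S X 0).G from k.f 0 (discOne S 0)
  | (i + 1), h, k, w =>
      qGenMk S X i (k.f (i + 1) (discOne S (i + 1)))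
        ⟨h.f i (bdryOne S i), bdryCycleMem S X i h⟩
        (canon_compat S X i h k w)

/-
A generator `a` of `(QX)_i` is the same thing as a lifting problem of `∂_i → 2_i` against `ε_X`:
the map `genHom a : 2_i → QX` picking out `a` gives the square `(ι_i ≫ genHom a, genHom a ≫ ε)`,
and `canonGen` reads the generator back off a square. Consequently a map `u : QX → Y` over `X`
commutes with the chosen liftings exactly when, for every generator `a`, `u a` is the `ψ`-chosen
lift of the square `(ι_i ≫ genHom a ≫ u, genHom a ≫ ε)`. That square only involves `u` in degree
`i - 1`, so this condition defines `u` degree by degree and determines it uniquely.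
-/

section

variable {S}

theorem isZero_of_punit_eq {M : ModuleCat.{0} S} (e : ModuleCat.of S PUnit = M) : IsZero M := by
  subst e
  exact ModuleCat.isZero_of_subsingleton _

theorem hom_ext_of_ring_eq {M N : ModuleCat.{0} S} (e : ModuleCat.of S S = M) {f g : M ⟶ N}
    (h : f (eqToHom e (1 : S)) = g (eqToHom e (1 : S))) : f = g :=
  (cancel_epi (eqToHom e)).1 (ModuleCat.hom_ext (LinearMap.ext_ring h))

noncomputable def toSpanSingleton {M : ModuleCat.{0} S} (y : M) : ModuleCat.of S S ⟶ M :=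
  ModuleCat.ofHom (LinearMap.toSpanSingleton S M y)

theorem eqToHom_comp_toSpanSingleton_apply {M N : ModuleCat.{0} S} (e : ModuleCat.of S S = M)
    (e' : M = ModuleCat.of S S) (y : N) :
    (eqToHom e' ≫ toSpanSingleton y) (eqToHom e (1 : S)) = y := by
  change toSpanSingleton y ((eqToHom e ≫ eqToHom e') (1 : S)) = y
  rw [eqToHom_trans, eqToHom_refl]
  exact one_smul S y

theorem comp_f_apply {A B C : Ch S} (m : A ⟶ B) (m' : B ⟶ C) (n : ℕ) (x : A.X n) :
    (m ≫ m').f n x = m'.f n (m.f n x) := rfl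

theorem comm_apply {A B : Ch S} (m : A ⟶ B) (i j : ℕ) (x : A.X i) :
    B.d i j (m.f i x) = m.f j (A.d i j x) :=
  ConcreteCategory.congr_hom (m.comm i j) x

theorem d_d_apply (W : Ch S) (i j k : ℕ) (y : W.X i) : W.d j k (W.d i j y) = 0 :=
  ConcreteCategory.congr_hom (W.d_comp_d i j k) y

theorem disc_X_eq {i n : ℕ} (h : n = i ∨ n + 1 = i) : (disc S i).X n = ModuleCat.of S S :=
  if_pos h

theorem isZero_disc_X {i n : ℕ} (h : ¬(n = i ∨ n + 1 = i)) : IsZero ((disc S i).X n) :=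
  isZero_of_punit_eq (if_neg h).symm

theorem disc_d_eq_zero {i j : ℕ} (h : j + 1 ≠ i) : (disc S i).d (j + 1) j = 0 :=
  (ChainComplex.of_d _ _ j).trans (dif_neg h)

theorem disc_d_apply (i : ℕ) (e : ModuleCat.of S S = (disc S (i + 1)).X (i + 1))
    (e' : ModuleCat.of S S = (disc S (i + 1)).X i) :
    (disc S (i + 1)).d (i + 1) i (eqToHom e (1 : S)) = eqToHom e' (1 : S) := by
  rw [show (disc S (i + 1)).d (i + 1) i = dD S (i + 1) i from ChainComplex.of_d _ _ i, dD,
    dif_pos rfl]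
  exact ConcreteCategory.congr_hom (eqToHom_trans e _) (1 : S)

noncomputable def discMapApp (W : Ch S) (i : ℕ) (y : W.X i) (n : ℕ) : (disc S i).X n ⟶ W.X n :=
  if h : n = i then
    eqToHom (disc_X_eq (Or.inl h)) ≫ toSpanSingleton y ≫ eqToHom (congrArg W.X h.symm)
  else if h' : n + 1 = i then
    eqToHom (disc_X_eq (Or.inr h')) ≫ toSpanSingleton (W.d i n y)
  else 0

theorem discMapApp_self (W : Ch S) (i : ℕ) (y : W.X i) (e : ModuleCat.of S S = (disc S i).X i) :
    discMapApp W i y i (eqToHom e (1 : S)) = y := by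
  rw [discMapApp, dif_pos rfl, eqToHom_refl, Category.comp_id]
  exact eqToHom_comp_toSpanSingleton_apply e _ y

theorem discMapApp_succ (W : Ch S) (i : ℕ) (y : W.X (i + 1))
    (e : ModuleCat.of S S = (disc S (i + 1)).X i) :
    discMapApp W (i + 1) y i (eqToHom e (1 : S)) = W.d (i + 1) i y := by
  rw [discMapApp, dif_neg (by omega), dif_pos rfl]
  exact eqToHom_comp_toSpanSingleton_apply e _ _

noncomputable def discMap (W : Ch S) (i : ℕ) (y : W.X i) : disc S i ⟶ W where
  f := discMapApp W i y
  comm' := by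
    rintro n j (rfl : j + 1 = n)
    by_cases hj : j + 1 = i
    · subst hj
      refine hom_ext_of_ring_eq (disc_X_eq (Or.inl rfl)).symm ?_
      rw [comp_apply, comp_apply, disc_d_apply _ _ (disc_X_eq (Or.inr rfl)).symm,
        discMapApp_self, discMapApp_succ]
    rw [disc_d_eq_zero hj, zero_comp]
    by_cases hj' : j + 1 + 1 = i
    · subst hj'
      refine hom_ext_of_ring_eq (disc_X_eq (Or.inr rfl)).symm ?_
      rw [comp_apply, discMapApp_succ, d_d_apply]
      rfl
    · exact (isZero_disc_X (by omega)).eq_of_src _ _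

theorem discMap_f_self (W : Ch S) (i : ℕ) (y : W.X i) : (discMap W i y).f i (discOne S i) = y :=
  discMapApp_self W i y _

theorem disc_hom_ext {W : Ch S} {i : ℕ} {f g : disc S i ⟶ W}
    (h : f.f i (discOne S i) = g.f i (discOne S i)) : f = g := by
  have htop : f.f i = g.f i := hom_ext_of_ring_eq (disc_X_eq (Or.inl rfl)).symm h
  ext n : 1
  by_cases hn : n = i
  · subst hn; exact htop
  by_cases hn' : n + 1 = i
  · subst hn'
    refine hom_ext_of_ring_eq (disc_X_eq (Or.inr rfl)).symm ?_
    rw [← disc_d_apply n (disc_X_eq (Or.inl rfl)).symm, ← comm_apply, ← comm_apply]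
    exact congrArg _ h
  · exact (isZero_disc_X (by omega)).eq_of_src _ _

theorem bdry_X_eq {i n : ℕ} (h : n + 1 = i) : (bdry S i).X n = ModuleCat.of S S :=
  if_pos h

theorem isZero_bdry_X {i n : ℕ} (h : n + 1 ≠ i) : IsZero ((bdry S i).X n) :=
  isZero_of_punit_eq (if_neg h).symm

theorem bdry_d_eq_zero (i j : ℕ) : (bdry S i).d (j + 1) j = 0 :=
  ChainComplex.of_d (bObj S i) (fun _ => 0) j

noncomputable def bdryMapApp (W : Ch S) (i : ℕ) (y : W.X i) (n : ℕ) :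
    (bdry S (i + 1)).X n ⟶ W.X n :=
  if h : n = i then
    eqToHom (bdry_X_eq (congrArg (· + 1) h)) ≫ toSpanSingleton y ≫ eqToHom (congrArg W.X h.symm)
  else 0

theorem bdryMapApp_self (W : Ch S) (i : ℕ) (y : W.X i)
    (e : ModuleCat.of S S = (bdry S (i + 1)).X i) : bdryMapApp W i y i (eqToHom e (1 : S)) = y := by
  rw [bdryMapApp, dif_pos rfl, eqToHom_refl, Category.comp_id]
  exact eqToHom_comp_toSpanSingleton_apply e _ y

noncomputable def bdryMap (W : Ch S) (i : ℕ) (y : W.X i) (hy : ∀ j, W.d i j y = 0) :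
    bdry S (i + 1) ⟶ W where
  f := bdryMapApp W i y
  comm' := by
    rintro n j (rfl : j + 1 = n)
    rw [bdry_d_eq_zero, zero_comp]
    by_cases hj : j + 1 = i
    · subst hj
      refine hom_ext_of_ring_eq (bdry_X_eq rfl).symm ?_
      rw [comp_apply, bdryMapApp_self, hy]
      rfl
    · rw [bdryMapApp, dif_neg hj, zero_comp]

theorem bdryMap_f_self (W : Ch S) (i : ℕ) (y : W.X i) (hy : ∀ j, W.d i j y = 0) :
    (bdryMap W i y hy).f i (bdryOne S i) = y :=
  bdryMapApp_self W i y _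

theorem bdry_hom_ext {W : Ch S} {i : ℕ} {f g : bdry S (i + 1) ⟶ W}
    (h : f.f i (bdryOne S i) = g.f i (bdryOne S i)) : f = g := by
  ext n : 1
  by_cases hn : n = i
  · subst hn
    exact hom_ext_of_ring_eq (bdry_X_eq rfl).symm h
  · exact (isZero_bdry_X (by omega)).eq_of_src _ _

theorem bdry_zero_hom_ext {W : Ch S} (f g : bdry S 0 ⟶ W) : f = g := by
  ext n : 1
  exact (isZero_bdry_X (by omega)).eq_of_src _ _

theorem incl_comp_f_bdryOne {W : Ch S} {i : ℕ} (m : disc S (i + 1) ⟶ W) :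
    (incl S (i + 1) ≫ m).f i (bdryOne S i) = W.d (i + 1) i (m.f (i + 1) (discOne S (i + 1))) := by
  rw [comp_f_apply, incl_one_eq_d_one, comm_apply]

namespace ChLiftChoice

variable {Y Z : Ch S} {f : Y ⟶ Z} (ψ : ChLiftChoice S f)

theorem lift_f_discOne_congr {i : ℕ} {h h' : bdry S i ⟶ Y} {k k' : disc S i ⟶ Z} (eh : h = h')
    (ek : k = k') (w : h ≫ f = incl S i ≫ k) (w' : h' ≫ f = incl S i ≫ k') :
    (ψ.lift i h k w).f i (discOne S i) = (ψ.lift i h' k' w').f i (discOne S i) := by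
  subst eh ek
  rfl

theorem f_lift_apply {i : ℕ} {h : bdry S i ⟶ Y} {k : disc S i ⟶ Z} (w : h ≫ f = incl S i ≫ k)
    (n : ℕ) (x : (disc S i).X n) : f.f n ((ψ.lift i h k w).f n x) = k.f n x := by
  rw [← comp_f_apply, ψ.fac_right]

theorem d_lift_discOne {i : ℕ} {h : bdry S (i + 1) ⟶ Y} {k : disc S (i + 1) ⟶ Z}
    (w : h ≫ f = incl S (i + 1) ≫ k) :
    Y.d (i + 1) i ((ψ.lift (i + 1) h k w).f (i + 1) (discOne S (i + 1))) = h.f i (bdryOne S i) := by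
  rw [← incl_comp_f_bdryOne, ψ.fac_left]

def IsHom {A : Ch S} {f' : A ⟶ Z} (φ : ChLiftChoice S f') (u : A ⟶ Y) (hu : u ≫ f = f') :
    Prop :=
  ∀ i h k w, φ.lift i h k w ≫ u = ψ.lift i (h ≫ u) k (by rw [Category.assoc, hu, w])

end ChLiftChoice

variable {X}

theorem Qc_X_hom_ext {i : ℕ} {M : ModuleCat.{0} S} {f g : (Qc S X).X i ⟶ M}
    (h : ∀ a : QGen S X i, f (Finsupp.single a 1) = g (Finsupp.single a 1)) : f = g :=
  ModuleCat.hom_ext (Finsupp.lhom_ext' fun a => LinearMap.ext_ring (h a))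

noncomputable def genHom {i : ℕ} (a : QGen S X i) : disc S i ⟶ Qc S X :=
  discMap (Qc S X) i (Finsupp.single a 1)

theorem genHom_f_discOne {i : ℕ} (a : QGen S X i) :
    (genHom a).f i (discOne S i) = Finsupp.single a 1 :=
  discMap_f_self _ _ _

theorem genHom_comp_Qeps_f_discOne {i : ℕ} (a : QGen S X i) :
    (genHom a ≫ Qeps S X).f i (discOne S i) = (qStep S X i).eps (Finsupp.single a 1) := by
  rw [comp_f_apply, genHom_f_discOne]
  rfl

theorem incl_comp_genHom_f_bdryOne {i : ℕ} (a : QGen S X (i + 1)) :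
    (incl S (i + 1) ≫ genHom a).f i (bdryOne S i) = (qDestruct S X i a).1.2.1 := by
  rw [incl_comp_f_bdryOne, genHom_f_discOne, Qc_d, Qd_single, one_smul]

theorem eps_single_canonGen (i : ℕ) (h : bdry S i ⟶ Qc S X) (k : disc S i ⟶ X)
    (w : h ≫ Qeps S X = incl S i ≫ k) :
    (qStep S X i).eps (Finsupp.single (canonGen S X i h k w) 1) = k.f i (discOne S i) := by
  cases i with
  | zero => exact (Finsupp.linearCombination_single S _ _).trans (one_smul S _)
  | succ i => exact (eps_single S X i _ 1).trans (one_smul S _)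

theorem Qd_single_canonGen (i : ℕ) (h : bdry S (i + 1) ⟶ Qc S X) (k : disc S (i + 1) ⟶ X)
    (w : h ≫ Qeps S X = incl S (i + 1) ≫ k) :
    Qd S X i (Finsupp.single (canonGen S X (i + 1) h k w) 1) = h.f i (bdryOne S i) :=
  (Qd_single S X i _ 1).trans (one_smul S _)

variable (X) in
noncomputable def genLiftChoice : ChLiftChoice S (Qeps S X) where
  lift i h k w := genHom (canonGen S X i h k w)
  fac_left i h k w := by
    cases i with
    | zero => exact bdry_zero_hom_ext _ _
    | succ i =>
      refine bdry_hom_ext ?_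
      rw [incl_comp_f_bdryOne, genHom_f_discOne, Qc_d, Qd_single_canonGen]
  fac_right i h k w := disc_hom_ext (by rw [genHom_comp_Qeps_f_discOne, eps_single_canonGen])

theorem canonGen_genHom {i : ℕ} (a : QGen S X i) :
    canonGen S X i (incl S i ≫ genHom a) (genHom a ≫ Qeps S X) (Category.assoc _ _ _) = a := by
  cases i with
  | zero =>
    exact (genHom_comp_Qeps_f_discOne a).trans
      ((Finsupp.linearCombination_single S _ _).trans (one_smul S _))
  | succ i =>
    refine Subtype.ext (Prod.ext ?_ (Subtype.ext (incl_comp_genHom_f_bdryOne a)))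
    exact (genHom_comp_Qeps_f_discOne a).trans ((eps_single S X i a 1).trans (one_smul S _))

variable {Y : Ch S} {g : Y ⟶ X} (ψ : ChLiftChoice S g)

def LiftsOnGenerators (u : Qc S X ⟶ Y) (hu : u ≫ g = Qeps S X) : Prop :=
  ∀ i (a : QGen S X i), u.f i (Finsupp.single a 1) =
    (ψ.lift i ((incl S i ≫ genHom a) ≫ u) (genHom a ≫ Qeps S X)
      (by rw [Category.assoc, Category.assoc, hu])).f i (discOne S i)

theorem liftsOnGenerators_of_isHom {u : Qc S X ⟶ Y} (hu : u ≫ g = Qeps S X)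
    (hc : ψ.IsHom (genLiftChoice X) u hu) : LiftsOnGenerators ψ u hu := by
  intro i a
  calc u.f i (Finsupp.single a 1)
      = ((genLiftChoice X).lift i (incl S i ≫ genHom a) (genHom a ≫ Qeps S X)
          (Category.assoc _ _ _) ≫ u).f i (discOne S i) := by
        change _ = u.f i ((genHom (canonGen S X i _ _ _)).f i (discOne S i))
        rw [canonGen_genHom, genHom_f_discOne]
    _ = _ := congrArg (fun m => m.f i (discOne S i)) (hc _ _ _ _)

theorem isHom_of_liftsOnGenerators {u : Qc S X ⟶ Y} {hu : u ≫ g = Qeps S X}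
    (hl : LiftsOnGenerators ψ u hu) : ψ.IsHom (genLiftChoice X) u hu := by
  intro i h k w
  refine disc_hom_ext ?_
  change u.f i ((genHom _).f i (discOne S i)) = _
  rw [genHom_f_discOne, hl]
  exact ψ.lift_f_discOne_congr (congrArg (· ≫ u) ((genLiftChoice X).fac_left i h k w))
    ((genLiftChoice X).fac_right i h k w) _ _

theorem eq_of_liftsOnGenerators {u₁ u₂ : Qc S X ⟶ Y} {hu₁ : u₁ ≫ g = Qeps S X}
    {hu₂ : u₂ ≫ g = Qeps S X} (h₁ : LiftsOnGenerators ψ u₁ hu₁)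
    (h₂ : LiftsOnGenerators ψ u₂ hu₂) : u₁ = u₂ := by
  have agree_of_bdry (i : ℕ) (hb : ∀ a : QGen S X i,
      (incl S i ≫ genHom a) ≫ u₁ = (incl S i ≫ genHom a) ≫ u₂) : u₁.f i = u₂.f i :=
    Qc_X_hom_ext fun a => by
      rw [h₁, h₂]
      exact ψ.lift_f_discOne_congr (hb a) rfl _ _
  ext i : 1
  induction i with
  | zero => exact agree_of_bdry 0 fun _ => bdry_zero_hom_ext _ _
  | succ i ih =>
    exact agree_of_bdry (i + 1) fun _ => bdry_hom_ext (ConcreteCategory.congr_hom ih _)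

noncomputable def liftOnGenerators (i : ℕ) (h : QGen S X i → (bdry S i ⟶ Y))
    (w : ∀ a, h a ≫ g = incl S i ≫ genHom a ≫ Qeps S X) : (QGen S X i →₀ S) →ₗ[S] Y.X i :=
  Finsupp.linearCombination S fun a =>
    (ψ.lift i (h a) (genHom a ≫ Qeps S X) (w a)).f i (discOne S i)

section liftOnGenerators

variable {i : ℕ} {h : QGen S X i → (bdry S i ⟶ Y)}
  {w : ∀ a, h a ≫ g = incl S i ≫ genHom a ≫ Qeps S X}

theorem liftOnGenerators_single (a : QGen S X i) :
    liftOnGenerators ψ i h w (Finsupp.single a 1) =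
      (ψ.lift i (h a) (genHom a ≫ Qeps S X) (w a)).f i (discOne S i) := by
  rw [liftOnGenerators, Finsupp.linearCombination_single, one_smul]

theorem f_liftOnGenerators (v : QGen S X i →₀ S) :
    g.f i (liftOnGenerators ψ i h w v) = (qStep S X i).eps v := by
  suffices (g.f i).hom ∘ₗ liftOnGenerators ψ i h w = (qStep S X i).eps from
    LinearMap.congr_fun this v
  refine Finsupp.lhom_ext' fun a => LinearMap.ext_ring ?_
  change g.f i (liftOnGenerators ψ i h w (Finsupp.single a 1)) = _
  rw [liftOnGenerators_single, ψ.f_lift_apply, genHom_comp_Qeps_f_discOne]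
  rfl

end liftOnGenerators

variable (g) in
structure LevelLift (i : ℕ) where
  toLinearMap : (QGen S X i →₀ S) →ₗ[S] Y.X i
  eps_eq : ∀ v, g.f i (toLinearMap v) = (qStep S X i).eps v
  map_cycle : ∀ v : QGen S X i →₀ S, v ∈ (qStep S X i).Z → ∀ j, Y.d i j (toLinearMap v) = 0

namespace LevelLift

noncomputable def zero : LevelLift g 0 where
  toLinearMap := liftOnGenerators ψ 0 (fun _ => 0) (fun _ => bdry_zero_hom_ext _ _)
  eps_eq := f_liftOnGenerators ψ
  map_cycle _ _ j := by
    rw [Y.shape 0 j (by simp)]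
    rfl

variable {i : ℕ} (p : LevelLift g i)

noncomputable def succBdry (a : QGen S X (i + 1)) : bdry S (i + 1) ⟶ Y :=
  bdryMap Y i (p.toLinearMap (qDestruct S X i a).1.2.1) (p.map_cycle _ (qDestruct S X i a).1.2.2)

theorem succBdry_f_bdryOne (a : QGen S X (i + 1)) :
    (p.succBdry a).f i (bdryOne S i) = p.toLinearMap (qDestruct S X i a).1.2.1 :=
  bdryMap_f_self _ _ _ _

theorem succBdry_comp (a : QGen S X (i + 1)) :
    p.succBdry a ≫ g = incl S (i + 1) ≫ genHom a ≫ Qeps S X := by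
  refine bdry_hom_ext ?_
  rw [comp_f_apply, succBdry_f_bdryOne]
  refine (p.eps_eq _).trans ?_
  rw [← Category.assoc, comp_f_apply, incl_comp_genHom_f_bdryOne]
  rfl

theorem d_liftOnGenerators_succBdry (v : QGen S X (i + 1) →₀ S) :
    Y.d (i + 1) i (liftOnGenerators ψ (i + 1) p.succBdry p.succBdry_comp v) =
      p.toLinearMap (Qd S X i v) := by
  suffices (Y.d (i + 1) i).hom ∘ₗ liftOnGenerators ψ (i + 1) p.succBdry p.succBdry_comp =
      p.toLinearMap ∘ₗ Qd S X i from LinearMap.congr_fun this v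
  refine Finsupp.lhom_ext' fun a => LinearMap.ext_ring ?_
  change Y.d (i + 1) i (liftOnGenerators ψ (i + 1) _ _ (Finsupp.single a 1)) =
    p.toLinearMap (Qd S X i (Finsupp.single a 1))
  rw [liftOnGenerators_single, ψ.d_lift_discOne, succBdry_f_bdryOne, Qd_single, one_smul]

noncomputable def succ : LevelLift g (i + 1) where
  toLinearMap := liftOnGenerators ψ (i + 1) p.succBdry p.succBdry_comp
  eps_eq := f_liftOnGenerators ψ
  map_cycle v hv j := by
    by_cases hj : j = i
    · subst hj
      have hv : Qd S X j v = 0 := hv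
      rw [d_liftOnGenerators_succBdry, hv, map_zero]
    · rw [Y.shape (i + 1) j (by simp; omega)]
      rfl

end LevelLift

noncomputable def levelLift : ∀ i, LevelLift g i
  | 0 => LevelLift.zero ψ
  | i + 1 => (levelLift i).succ ψ

noncomputable def liftHom : Qc S X ⟶ Y where
  f i := ModuleCat.ofHom (levelLift ψ i).toLinearMap
  comm' := by
    rintro _ i (rfl : i + 1 = _)
    refine ModuleCat.hom_ext (LinearMap.ext fun v => ?_)
    exact ((levelLift ψ i).d_liftOnGenerators_succBdry ψ v).trans
      (congrArg _ (Qc_d S X i v).symm)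

theorem liftHom_comp : liftHom ψ ≫ g = Qeps S X := by
  ext i : 1
  exact ModuleCat.hom_ext (LinearMap.ext (levelLift ψ i).eps_eq)

theorem liftHom_liftsOnGenerators : LiftsOnGenerators ψ (liftHom ψ) (liftHom_comp ψ) := by
  rintro (_ | i) a
  · exact (liftOnGenerators_single ψ a).trans
      (ψ.lift_f_discOne_congr (bdry_zero_hom_ext _ _) rfl _ _)
  · refine (liftOnGenerators_single ψ a).trans (ψ.lift_f_discOne_congr (bdry_hom_ext ?_) rfl _ _)
    rw [LevelLift.succBdry_f_bdryOne, comp_f_apply, incl_comp_genHom_f_bdryOne]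
    rfl

end

/-- `ε_X : QX ⟶ X`, equipped with the inclusion-of-generators
choice of liftings, is an initial object of `AAF/X`: for every chain map
`g : Y ⟶ X` equipped with a choice of liftings `ψ` there is a unique morphism
`u` over `X` commuting with the chosen liftings. -/
theorem statement5 (X : Ch S) :
    ∃ φ : ChLiftChoice S (Qeps S X),
      (∀ (i : ℕ) (h : bdry S i ⟶ Qc S X) (k : disc S i ⟶ X)
        (w : h ≫ Qeps S X = incl S i ≫ k),
        (φ.lift i h k w).f i (discOne S i)
          = Finsupp.single (canonGen S X i h k w) 1) ∧
      ∀ (Y : Ch S) (g : Y ⟶ X) (ψ : ChLiftChoice S g),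
        ∃! u : Qc S X ⟶ Y,
          ∃ hu : u ≫ g = Qeps S X,
            ∀ (i : ℕ) (h : bdry S i ⟶ Qc S X) (k : disc S i ⟶ X)
              (w : h ≫ Qeps S X = incl S i ≫ k),
              φ.lift i h k w ≫ u
                = ψ.lift i (h ≫ u) k (by rw [Category.assoc, hu, w]) := by
  refine ⟨genLiftChoice X, fun i h k w => genHom_f_discOne _, fun Y g ψ => ?_⟩
  have hlift := liftHom_liftsOnGenerators ψ
  refine ⟨liftHom ψ, ⟨liftHom_comp ψ, isHom_of_liftsOnGenerators ψ hlift⟩, ?_⟩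
  rintro u ⟨hu, hc⟩
  exact eq_of_liftsOnGenerators ψ (liftsOnGenerators_of_isHom ψ hu hc) hlift

end Statement5
end

section
/- Let P be a globular operad. The functor part P of the monad preserves n-bijective morphisms of globular sets for every natural number n. Consequently the free P-algebra functor K preserves n-bijective maps. -/
/-!
STATEMENT 16: Let `P` be a globular operad.  The functor part of `P` preserves
`n`-bijective morphisms of globular sets for every natural number `n`;
consequently the free `P`-algebra functor `K` preserves `n`-bijective maps.
-/

open CategoryTheory Limits Opposite

universe u

namespace Statement16

/-! ## The globe category and globular sets -/

/-- Objects of the globe category `G`. -/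
structure Globe where
  n : ℕ

/-- Morphisms of the globe category: generated by cosource and cotarget maps
`σ, τ : n → n+1` subject to the coglobular relations, so that there are exactly
two morphisms `n → m` for `n < m` (iterated cosource and cotarget) and only the
identity `n → n`. -/
inductive GlobeHom : Globe → Globe → Type where
  | id (a : Globe) : GlobeHom a a
  | src {a b : Globe} : a.n < b.n → GlobeHom a b
  | tgt {a b : Globe} : a.n < b.n → GlobeHom a b

namespace GlobeHom

theorem le : ∀ {a b : Globe}, GlobeHom a b → a.n ≤ b.n
  | _, _, .id _ => le_refl _
  | _, _, .src h => le_of_lt h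
  | _, _, .tgt h => le_of_lt h

/-- Composition (in diagrammatic order); it is determined by its first
non-identity factor, which encodes the coglobular relations. -/
def comp : ∀ {a b c : Globe}, GlobeHom a b → GlobeHom b c → GlobeHom a c
  | _, _, _, .id _, g => g
  | _, _, _, .src h, g => .src (lt_of_lt_of_le h g.le)
  | _, _, _, .tgt h, g => .tgt (lt_of_lt_of_le h g.le)

end GlobeHom

instance : Category Globe where
  Hom := GlobeHom
  id := GlobeHom.id
  comp := GlobeHom.comp
  id_comp f := rfl
  comp_id f := by cases f <;> rfl
  assoc f g h := by cases f <;> rfl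

/-- Globular sets: presheaves on the globe category. -/
abbrev GlobularSet : Type 1 := Globeᵒᵖ ⥤ Type

/-- The set of `m`-cells of a globular set. -/
abbrev cell (X : GlobularSet) (m : ℕ) : Type := X.obj (op ⟨m⟩)

/-- The `k`-source of an `m`-cell. -/
def csrc (X : GlobularSet) {k m : ℕ} (h : k < m) : cell X m → cell X k :=
  X.map (Quiver.Hom.op (GlobeHom.src h))

/-- The `k`-target of an `m`-cell. -/
def ctgt (X : GlobularSet) {k m : ℕ} (h : k < m) : cell X m → cell X k :=
  X.map (Quiver.Hom.op (GlobeHom.tgt h))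

/-- A morphism of globular sets is `n`-bijective (for an integer `n ≥ -1`) if it
is bijective in dimensions `0, …, n`; every morphism is `(-1)`-bijective. -/
def ZBijective (n : ℤ) {X Y : GlobularSet} (f : X ⟶ Y) : Prop :=
  ∀ i : ℕ, (i : ℤ) ≤ n → Function.Bijective (f.app (op ⟨i⟩))

/-- Parallel pairs of `i`-cells (every pair of `0`-cells is parallel). -/
def Parallel (X : GlobularSet) : ∀ (i : ℕ), cell X i → cell X i → Prop
  | 0, _, _ => True
  | (i + 1), a, b => csrc X (Nat.lt_succ_self i) a = csrc X (Nat.lt_succ_self i) b ∧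
      ctgt X (Nat.lt_succ_self i) a = ctgt X (Nat.lt_succ_self i) b

/-- The square comparing `(i+1)`-cells with parallel pairs of `i`-cells is a
pullback: every `(i+1)`-cell of `Y` whose boundary lifts to `X` lifts uniquely
to an `(i+1)`-cell of `X`. -/
def FullyFaithfulAt (i : ℕ) {X Y : GlobularSet} (f : X ⟶ Y) : Prop :=
  ∀ (a b : cell X i), Parallel X i a b →
    ∀ y : cell Y (i + 1),
      csrc Y (Nat.lt_succ_self i) y = f.app (op ⟨i⟩) a →
      ctgt Y (Nat.lt_succ_self i) y = f.app (op ⟨i⟩) b →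
      ∃! x : cell X (i + 1),
        f.app (op ⟨i + 1⟩) x = y ∧
        csrc X (Nat.lt_succ_self i) x = a ∧ ctgt X (Nat.lt_succ_self i) x = b

/-- A morphism of globular sets is `n`-fully faithful (for an integer
`n ≥ -1`): for `n ≥ 0` the comparison squares in dimensions `≥ n` are
pullbacks; only isomorphisms are `(-1)`-fully faithful. -/
def ZFullyFaithful (n : ℤ) {X Y : GlobularSet} (f : X ⟶ Y) : Prop :=
  if n = -1 then IsIso f
  else ∀ i : ℕ, n ≤ (i : ℤ) → FullyFaithfulAt i f

/-! ## Strict ω-categories -/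

/-- The data of a strict ω-category: a globular set with composition of
`m`-cells along a `k`-cell boundary for every `k < m`, and identities.
`comp h x y` is the composite of `x` followed by `y` along their common
`k`-boundary. -/
structure PreOmega : Type 1 where
  C : GlobularSet
  comp : ∀ {k m : ℕ}, k < m → cell C m → cell C m → cell C m
  ident : ∀ m : ℕ, cell C m → cell C (m + 1)

/-- Iterated identities. -/
def PreOmega.iterId (A : PreOmega) {k : ℕ} :
    (m : ℕ) → k ≤ m → cell A.C k → cell A.C m
  | 0, h, x => (Nat.le_zero.mp h) ▸ x
  | (m + 1), h, x =>
      if e : k = m + 1 then e ▸ x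
      else A.ident m (A.iterId m (by omega) x)

/-- Strict ω-categories: the data of `PreOmega` subject to the usual axioms
(boundaries of composites, boundaries of identities, associativity, units,
functoriality of identities, and interchange). -/
structure StrictOmegaCat : Type 1 extends PreOmega where
  src_comp : ∀ {k m : ℕ} (h : k < m) (x y : cell C m),
      ctgt C h x = csrc C h y → csrc C h (comp h x y) = csrc C h x
  tgt_comp : ∀ {k m : ℕ} (h : k < m) (x y : cell C m),
      ctgt C h x = csrc C h y → ctgt C h (comp h x y) = ctgt C h y
  bdry_comp_lower : ∀ {j k m : ℕ} (hj : j < k) (h : k < m) (x y : cell C m),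
      ctgt C h x = csrc C h y →
      csrc C (hj.trans h) (comp h x y) = csrc C (hj.trans h) x ∧
      ctgt C (hj.trans h) (comp h x y) = ctgt C (hj.trans h) x
  bdry_comp_mid : ∀ {k j m : ℕ} (h : k < m) (hkj : k < j) (hjm : j < m)
      (x y : cell C m), ctgt C h x = csrc C h y →
      csrc C hjm (comp h x y) = comp hkj (csrc C hjm x) (csrc C hjm y) ∧
      ctgt C hjm (comp h x y) = comp hkj (ctgt C hjm x) (ctgt C hjm y)
  src_ident : ∀ (m : ℕ) (x : cell C m),
      csrc C (Nat.lt_succ_self m) (ident m x) = x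
  tgt_ident : ∀ (m : ℕ) (x : cell C m),
      ctgt C (Nat.lt_succ_self m) (ident m x) = x
  comp_assoc : ∀ {k m : ℕ} (h : k < m) (x y z : cell C m),
      ctgt C h x = csrc C h y → ctgt C h y = csrc C h z →
      comp h (comp h x y) z = comp h x (comp h y z)
  comp_unit_left : ∀ {k m : ℕ} (h : k < m) (x : cell C m),
      comp h (toPreOmega.iterId m h.le (csrc C h x)) x = x
  comp_unit_right : ∀ {k m : ℕ} (h : k < m) (x : cell C m),
      comp h x (toPreOmega.iterId m h.le (ctgt C h x)) = x
  ident_comp : ∀ {k m : ℕ} (h : k < m) (x y : cell C m),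
      ctgt C h x = csrc C h y →
      ident m (comp h x y) = comp (h.trans (Nat.lt_succ_self m))
        (ident m x) (ident m y)
  interchange : ∀ {j k m : ℕ} (hj : j < k) (hk : k < m) (x y z w : cell C m),
      ctgt C hk x = csrc C hk y → ctgt C hk z = csrc C hk w →
      ctgt C (hj.trans hk) x = csrc C (hj.trans hk) z →
      comp (hj.trans hk) (comp hk x y) (comp hk z w)
        = comp hk (comp (hj.trans hk) x z) (comp (hj.trans hk) y w)

/-- Strict maps of strict ω-categories. -/
@[ext]
structure OmegaHom (A B : StrictOmegaCat) : Type where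
  f : A.C ⟶ B.C
  comp_map : ∀ {k m : ℕ} (h : k < m) (x y : cell A.C m),
      ctgt A.C h x = csrc A.C h y →
      f.app (op ⟨m⟩) (A.comp h x y)
        = B.comp h (f.app (op ⟨m⟩) x) (f.app (op ⟨m⟩) y)
  ident_map : ∀ (m : ℕ) (x : cell A.C m),
      f.app (op ⟨m + 1⟩) (A.ident m x) = B.ident m (f.app (op ⟨m⟩) x)

theorem OmegaHom.src_map {A B : StrictOmegaCat} (F : OmegaHom A B) {k m : ℕ}
    (h : k < m) (x : cell A.C m) :
    F.f.app (op ⟨k⟩) (csrc A.C h x) = csrc B.C h (F.f.app (op ⟨m⟩) x) :=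
  NatTrans.naturality_apply F.f (Quiver.Hom.op (GlobeHom.src h)) x

theorem OmegaHom.tgt_map {A B : StrictOmegaCat} (F : OmegaHom A B) {k m : ℕ}
    (h : k < m) (x : cell A.C m) :
    F.f.app (op ⟨k⟩) (ctgt A.C h x) = ctgt B.C h (F.f.app (op ⟨m⟩) x) :=
  NatTrans.naturality_apply F.f (Quiver.Hom.op (GlobeHom.tgt h)) x

instance : Category StrictOmegaCat where
  Hom := OmegaHom
  id A := { f := 𝟙 A.C, comp_map := by intros; rfl, ident_map := by intros; rfl }
  comp {A B C} F G :=
    { f := F.f ≫ G.f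
      comp_map := by
        intro k m h x y hc
        have h1 := F.comp_map h x y hc
        have h2 := G.comp_map h (F.f.app (op ⟨m⟩) x) (F.f.app (op ⟨m⟩) y)
          (by rw [← F.tgt_map, ← F.src_map, hc])
        simp only [NatTrans.comp_app, types_comp_apply, h1, h2]
      ident_map := by
        intro m x
        simp only [NatTrans.comp_app, types_comp_apply, F.ident_map, G.ident_map] }
  id_comp F := OmegaHom.ext (Category.id_comp F.f)
  comp_id F := OmegaHom.ext (Category.comp_id F.f)
  assoc F G H := OmegaHom.ext (Category.assoc F.f G.f H.f)

/-- The forgetful functor from strict ω-categories to globular sets. -/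
def forgetOmega : StrictOmegaCat ⥤ GlobularSet where
  obj A := A.C
  map F := F.f



/-- A morphism of globular sets is `n`-bijective (`n ∈ ℕ`) when it is bijective
in dimensions `0, …, n`. -/
def NBijective (n : ℕ) {X Y : GlobularSet} (f : X ⟶ Y) : Prop :=
  ∀ i : ℕ, i ≤ n → Function.Bijective (f.app (op ⟨i⟩))

/-!
Let `codiscAbove n A` be the strict ω-category that agrees with `A` up to dimension `n` and has
exactly one cell between any two parallel cells of dimension `≥ n`, so that its cells above `n`
are the parallel pairs of `n`-cells of `A`. The canonical ω-functor `A ⟶ codiscAbove n A` is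
bijective in dimensions `≤ n`, and the underlying globular set of `codiscAbove n A` only depends
on the cells of `A` of dimension `≤ n`, so it turns an `n`-bijective `f : X ⟶ Y` into an
isomorphism. The universal property of the free ω-category `F Y` then yields
`ℓ : F Y ⟶ codiscAbove n (F X)` such that `F f ≫ ℓ` and `ℓ ≫ codiscAbove n (F f)` are the
canonical ω-functors; in dimensions `≤ n` this forces `ℓ`, and hence `F f`, to be bijective.
Finally `P f` is a pullback of `T f = U (F f)` along `κ`, and pullbacks of bijections of sets are
bijections.
-/

namespace GlobeHom

theorem eq_id {m : ℕ} : ∀ u : GlobeHom ⟨m⟩ ⟨m⟩, u = .id ⟨m⟩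
  | .id _ => rfl
  | .src h => absurd h (lt_irrefl m)
  | .tgt h => absurd h (lt_irrefl m)

/-- At `k = m` this is the identity, which spares casting cells along `k = m`. -/
def srcLE {k m : ℕ} (h : k ≤ m) : GlobeHom ⟨k⟩ ⟨m⟩ :=
  if he : k = m then he ▸ .id ⟨k⟩ else .src (h.lt_of_ne he)

def tgtLE {k m : ℕ} (h : k ≤ m) : GlobeHom ⟨k⟩ ⟨m⟩ :=
  if he : k = m then he ▸ .id ⟨k⟩ else .tgt (h.lt_of_ne he)

theorem srcLE_of_lt {k m : ℕ} (h : k ≤ m) (h' : k < m) : srcLE h = .src h' :=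
  dif_neg h'.ne

theorem tgtLE_of_lt {k m : ℕ} (h : k ≤ m) (h' : k < m) : tgtLE h = .tgt h' :=
  dif_neg h'.ne

end GlobeHom

abbrev cellMap (X : GlobularSet) {k m : ℕ} (v : GlobeHom ⟨k⟩ ⟨m⟩) : cell X m → cell X k :=
  X.map (Quiver.Hom.op (v : (⟨k⟩ : Globe) ⟶ ⟨m⟩))

abbrev csrcLE (X : GlobularSet) {k m : ℕ} (h : k ≤ m) : cell X m → cell X k :=
  cellMap X (GlobeHom.srcLE h)

abbrev ctgtLE (X : GlobularSet) {k m : ℕ} (h : k ≤ m) : cell X m → cell X k :=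
  cellMap X (GlobeHom.tgtLE h)

section GlobularSet

variable (X : GlobularSet)

theorem cellMap_self {m : ℕ} (u : GlobeHom ⟨m⟩ ⟨m⟩) (x : cell X m) : cellMap X u x = x := by
  rw [GlobeHom.eq_id u]
  exact ConcreteCategory.congr_hom (X.map_id (op ⟨m⟩)) x

theorem cellMap_cellMap {k j m : ℕ} (u : GlobeHom ⟨k⟩ ⟨j⟩) (v : GlobeHom ⟨j⟩ ⟨m⟩)
    (x : cell X m) : cellMap X u (cellMap X v x) = cellMap X (GlobeHom.comp u v) x := by
  show (X.map _ ≫ X.map _) x = X.map _ x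
  rw [← X.map_comp]
  rfl

theorem csrc_cellMap {k j m : ℕ} (h : k < j) (v : GlobeHom ⟨j⟩ ⟨m⟩) (x : cell X m) :
    csrc X h (cellMap X v x) = csrc X (h.trans_le v.le) x :=
  cellMap_cellMap X (.src h) v x

theorem ctgt_cellMap {k j m : ℕ} (h : k < j) (v : GlobeHom ⟨j⟩ ⟨m⟩) (x : cell X m) :
    ctgt X h (cellMap X v x) = ctgt X (h.trans_le v.le) x :=
  cellMap_cellMap X (.tgt h) v x

variable {k j m : ℕ}

theorem csrc_csrc (h₁ : k < j) (h₂ : j < m) (x : cell X m) :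
    csrc X h₁ (csrc X h₂ x) = csrc X (h₁.trans h₂) x := csrc_cellMap X h₁ (.src h₂) x

theorem csrc_ctgt (h₁ : k < j) (h₂ : j < m) (x : cell X m) :
    csrc X h₁ (ctgt X h₂ x) = csrc X (h₁.trans h₂) x := csrc_cellMap X h₁ (.tgt h₂) x

theorem ctgt_csrc (h₁ : k < j) (h₂ : j < m) (x : cell X m) :
    ctgt X h₁ (csrc X h₂ x) = ctgt X (h₁.trans h₂) x := ctgt_cellMap X h₁ (.src h₂) x

theorem ctgt_ctgt (h₁ : k < j) (h₂ : j < m) (x : cell X m) :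
    ctgt X h₁ (ctgt X h₂ x) = ctgt X (h₁.trans h₂) x := ctgt_cellMap X h₁ (.tgt h₂) x

theorem csrcLE_self (h : m ≤ m) (x : cell X m) : csrcLE X h x = x := cellMap_self X _ x

theorem ctgtLE_self (h : m ≤ m) (x : cell X m) : ctgtLE X h x = x := cellMap_self X _ x

theorem csrcLE_of_lt (h : k ≤ m) (h' : k < m) (x : cell X m) : csrcLE X h x = csrc X h' x := by
  rw [csrcLE, GlobeHom.srcLE_of_lt h h']; rfl

theorem ctgtLE_of_lt (h : k ≤ m) (h' : k < m) (x : cell X m) : ctgtLE X h x = ctgt X h' x := by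
  rw [ctgtLE, GlobeHom.tgtLE_of_lt h h']; rfl

theorem csrc_csrcLE (h : k < j) (hj : j ≤ m) (x : cell X m) :
    csrc X h (csrcLE X hj x) = csrcLE X (h.le.trans hj) x := by
  rw [csrc_cellMap, csrcLE_of_lt]

theorem ctgt_csrcLE (h : k < j) (hj : j ≤ m) (x : cell X m) :
    ctgt X h (csrcLE X hj x) = ctgtLE X (h.le.trans hj) x := by
  rw [ctgt_cellMap, ctgtLE_of_lt]

theorem csrc_ctgtLE (h : k < j) (hj : j ≤ m) (x : cell X m) :
    csrc X h (ctgtLE X hj x) = csrcLE X (h.le.trans hj) x := by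
  rw [csrc_cellMap, csrcLE_of_lt]

theorem ctgt_ctgtLE (h : k < j) (hj : j ≤ m) (x : cell X m) :
    ctgt X h (ctgtLE X hj x) = ctgtLE X (h.le.trans hj) x := by
  rw [ctgt_cellMap, ctgtLE_of_lt]

theorem csrcLE_csrc (hk : k ≤ j) (h : j < m) (x : cell X m) :
    csrcLE X hk (csrc X h x) = csrc X (hk.trans_lt h) x := by
  rcases hk.lt_or_eq with hk | rfl
  · rw [csrcLE_of_lt X _ hk, csrc_csrc]
  · exact csrcLE_self X _ _

theorem ctgtLE_ctgt (hk : k ≤ j) (h : j < m) (x : cell X m) :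
    ctgtLE X hk (ctgt X h x) = ctgt X (hk.trans_lt h) x := by
  rcases hk.lt_or_eq with hk | rfl
  · rw [ctgtLE_of_lt X _ hk, ctgt_ctgt]
  · exact ctgtLE_self X _ _

end GlobularSet

section Naturality

variable {X Y : GlobularSet} (w : X ⟶ Y) {k m : ℕ}

theorem app_cellMap (v : GlobeHom ⟨k⟩ ⟨m⟩) (x : cell X m) :
    w.app (op ⟨k⟩) (cellMap X v x) = cellMap Y v (w.app (op ⟨m⟩) x) :=
  NatTrans.naturality_apply w (Quiver.Hom.op (v : (⟨k⟩ : Globe) ⟶ ⟨m⟩)) x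

theorem app_csrc (h : k < m) (x : cell X m) :
    w.app (op ⟨k⟩) (csrc X h x) = csrc Y h (w.app (op ⟨m⟩) x) := app_cellMap w (.src h) x

theorem app_ctgt (h : k < m) (x : cell X m) :
    w.app (op ⟨k⟩) (ctgt X h x) = ctgt Y h (w.app (op ⟨m⟩) x) := app_cellMap w (.tgt h) x

end Naturality

section Parallel

variable {X : GlobularSet} {n : ℕ}

theorem parallel_refl (a : cell X n) : Parallel X n a a := by
  cases n
  exacts [trivial, ⟨rfl, rfl⟩]

theorem Parallel.trans {a b c : cell X n} (h₁ : Parallel X n a b) (h₂ : Parallel X n b c) :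
    Parallel X n a c := by
  cases n
  exacts [trivial, ⟨h₁.1.trans h₂.1, h₁.2.trans h₂.2⟩]

theorem Parallel.csrc_eq {a b : cell X n} (hp : Parallel X n a b) {k : ℕ} (hk : k < n) :
    csrc X hk a = csrc X hk b := by
  cases n with
  | zero => omega
  | succ n =>
    rcases Nat.lt_succ_iff_lt_or_eq.mp hk with h | rfl
    · rw [← csrc_csrc X h (Nat.lt_succ_self n), hp.1, csrc_csrc]
    · exact hp.1

theorem Parallel.ctgt_eq {a b : cell X n} (hp : Parallel X n a b) {k : ℕ} (hk : k < n) :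
    ctgt X hk a = ctgt X hk b := by
  cases n with
  | zero => omega
  | succ n =>
    rcases Nat.lt_succ_iff_lt_or_eq.mp hk with h | rfl
    · rw [← ctgt_ctgt X h (Nat.lt_succ_self n), hp.2, ctgt_ctgt]
    · exact hp.2

theorem Parallel.csrcLE_eq {a b : cell X n} (hp : Parallel X n a b) {k : ℕ} (hk : k < n) :
    csrcLE X hk.le a = csrcLE X hk.le b := by
  rw [csrcLE_of_lt X _ hk, csrcLE_of_lt X _ hk, hp.csrc_eq hk]

theorem Parallel.ctgtLE_eq {a b : cell X n} (hp : Parallel X n a b) {k : ℕ} (hk : k < n) :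
    ctgtLE X hk.le a = ctgtLE X hk.le b := by
  rw [ctgtLE_of_lt X _ hk, ctgtLE_of_lt X _ hk, hp.ctgt_eq hk]

theorem parallel_csrc_ctgt {m : ℕ} (h : n < m) (z : cell X m) :
    Parallel X n (csrc X h z) (ctgt X h z) := by
  cases n
  exacts [trivial, ⟨by rw [csrc_csrc, csrc_ctgt], by rw [ctgt_csrc, ctgt_ctgt]⟩]

theorem Parallel.map {Y : GlobularSet} (w : X ⟶ Y) {a b : cell X n} (hp : Parallel X n a b) :
    Parallel Y n (w.app (op ⟨n⟩) a) (w.app (op ⟨n⟩) b) := by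
  cases n
  exacts [trivial, ⟨by rw [← app_csrc, ← app_csrc, hp.1], by rw [← app_ctgt, ← app_ctgt, hp.2]⟩]

end Parallel

theorem Parallel.comp {A : StrictOmegaCat} {n k : ℕ} (hk : k < n) {a b a' b' : cell A.C n}
    (hp : Parallel A.C n a b) (hp' : Parallel A.C n a' b')
    (e : ctgt A.C hk a = csrc A.C hk a') (e' : ctgt A.C hk b = csrc A.C hk b') :
    Parallel A.C n (A.comp hk a a') (A.comp hk b b') := by
  cases n with
  | zero => omega
  | succ n =>
    rcases Nat.lt_succ_iff_lt_or_eq.mp hk with hkn | rfl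
    · have hs := A.bdry_comp_mid hk hkn (Nat.lt_succ_self n)
      exact ⟨by rw [(hs a a' e).1, (hs b b' e').1, hp.1, hp'.1],
        by rw [(hs a a' e).2, (hs b b' e').2, hp.2, hp'.2]⟩
    · exact ⟨by rw [A.src_comp hk a a' e, A.src_comp hk b b' e', hp.1],
        by rw [A.tgt_comp hk a a' e, A.tgt_comp hk b b' e', hp'.2]⟩

/-- Cells of `codiscAboveGlob n X`: up to dimension `n` those of `X`; above `n`, one cell for
each parallel pair of `n`-cells of `X` (its `n`-source and `n`-target). -/
inductive CodiscCell (n : ℕ) (X : GlobularSet) : ℕ → Type where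
  | low {j : ℕ} (h : j ≤ n) (a : cell X j) : CodiscCell n X j
  | high {j : ℕ} (h : n < j) (a b : cell X n) (hp : Parallel X n a b) : CodiscCell n X j

namespace CodiscCell

section

variable {n : ℕ} {X : GlobularSet}

theorem low_congr {j : ℕ} (h h' : j ≤ n) {a a' : cell X j} (e : a = a') :
    (low h a : CodiscCell n X j) = low h' a' := by
  subst e; rfl

theorem high_congr {j : ℕ} (h h' : n < j) {a a' b b' : cell X n}
    {hp : Parallel X n a b} {hp' : Parallel X n a' b'} (e : a = a') (e' : b = b') :
    (high h a b hp : CodiscCell n X j) = high h' a' b' hp' := by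
  subst e e'; rfl

theorem low_injective {j : ℕ} {h h' : j ≤ n} {a a' : cell X j}
    (e : (low h a : CodiscCell n X j) = low h' a') : a = a' := by
  injection e

theorem high_injective {j : ℕ} {h h' : n < j} {a a' b b' : cell X n}
    {hp : Parallel X n a b} {hp' : Parallel X n a' b'}
    (e : (high h a b hp : CodiscCell n X j) = high h' a' b' hp') : a = a' ∧ b = b' := by
  injection e with e₁ e₂
  exact ⟨e₁, e₂⟩

theorem exists_eq_low {j : ℕ} (hj : j ≤ n) : ∀ x : CodiscCell n X j, ∃ a, x = low hj a
  | low _ a => ⟨a, rfl⟩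
  | high h .. => absurd hj (not_le.mpr h)

theorem exists_eq_high {j : ℕ} (hj : n < j) :
    ∀ x : CodiscCell n X j, ∃ a b hp, x = high hj a b hp
  | low h _ => absurd hj (not_lt.mpr h)
  | high _ a b hp => ⟨a, b, hp, rfl⟩

def src {k j : ℕ} (h : k < j) : CodiscCell n X j → CodiscCell n X k
  | low hj a => low (h.le.trans hj) (csrc X h a)
  | high _ a b hp => if hk : k ≤ n then low hk (csrcLE X hk a) else high (not_le.mp hk) a b hp

def tgt {k j : ℕ} (h : k < j) : CodiscCell n X j → CodiscCell n X k
  | low hj a => low (h.le.trans hj) (ctgt X h a)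
  | high _ a b hp => if hk : k ≤ n then low hk (ctgtLE X hk b) else high (not_le.mp hk) a b hp

variable {k j : ℕ} {h : k < j}

theorem src_low {hj : j ≤ n} {a : cell X j} :
    src h (low hj a : CodiscCell n X j) = low (h.le.trans hj) (csrc X h a) := rfl

theorem tgt_low {hj : j ≤ n} {a : cell X j} :
    tgt h (low hj a : CodiscCell n X j) = low (h.le.trans hj) (ctgt X h a) := rfl

variable {hj : n < j} {a b : cell X n} {hp : Parallel X n a b}

theorem src_high_of_le (hk : k ≤ n) : src h (high hj a b hp) = low hk (csrcLE X hk a) :=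
  dif_pos hk

theorem tgt_high_of_le (hk : k ≤ n) : tgt h (high hj a b hp) = low hk (ctgtLE X hk b) :=
  dif_pos hk

theorem src_high_of_lt (hk : n < k) : src h (high hj a b hp) = high hk a b hp :=
  dif_neg (not_le.mpr hk)

theorem tgt_high_of_lt (hk : n < k) : tgt h (high hj a b hp) = high hk a b hp :=
  dif_neg (not_le.mpr hk)

end

section

variable {n : ℕ} {X : GlobularSet} {k j m : ℕ} (h₁ : k < j) (h₂ : j < m)

theorem src_src : ∀ x : CodiscCell n X m, src h₁ (src h₂ x) = src (h₁.trans h₂) x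
  | low hm a => by rw [src_low, src_low, src_low, csrc_csrc]
  | high hm a b hp => by
    by_cases hj : j ≤ n
    · rw [src_high_of_le hj, src_low, src_high_of_le (h₁.le.trans hj),
        csrc_csrcLE]
    · rw [src_high_of_lt (not_le.mp hj)]; rfl

theorem src_tgt : ∀ x : CodiscCell n X m, src h₁ (tgt h₂ x) = src (h₁.trans h₂) x
  | low hm a => by rw [tgt_low, src_low, src_low, csrc_ctgt]
  | high hm a b hp => by
    by_cases hj : j ≤ n
    · rw [tgt_high_of_le hj, src_low, src_high_of_le (h₁.le.trans hj),
        csrc_ctgtLE, hp.csrcLE_eq (h₁.trans_le hj)]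
    · rw [tgt_high_of_lt (not_le.mp hj)]; rfl

theorem tgt_src : ∀ x : CodiscCell n X m, tgt h₁ (src h₂ x) = tgt (h₁.trans h₂) x
  | low hm a => by rw [src_low, tgt_low, tgt_low, ctgt_csrc]
  | high hm a b hp => by
    by_cases hj : j ≤ n
    · rw [src_high_of_le hj, tgt_low, tgt_high_of_le (h₁.le.trans hj),
        ctgt_csrcLE, hp.ctgtLE_eq (h₁.trans_le hj)]
    · rw [src_high_of_lt (not_le.mp hj)]; rfl

theorem tgt_tgt : ∀ x : CodiscCell n X m, tgt h₁ (tgt h₂ x) = tgt (h₁.trans h₂) x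
  | low hm a => by rw [tgt_low, tgt_low, tgt_low, ctgt_ctgt]
  | high hm a b hp => by
    by_cases hj : j ≤ n
    · rw [tgt_high_of_le hj, tgt_low, tgt_high_of_le (h₁.le.trans hj),
        ctgt_ctgtLE]
    · rw [tgt_high_of_lt (not_le.mp hj)]; rfl

def act : ∀ {a b : Globe}, GlobeHom a b → CodiscCell n X b.n → CodiscCell n X a.n
  | _, _, .id _ => id
  | _, _, .src h => src h
  | _, _, .tgt h => tgt h

theorem act_comp {a b c : Globe} (u : GlobeHom a b) (v : GlobeHom b c) (x : CodiscCell n X c.n) :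
    act (u.comp v) x = act u (act v x) := by
  cases u <;> cases v
  all_goals first
    | rfl
    | exact (src_src _ _ x).symm | exact (src_tgt _ _ x).symm
    | exact (tgt_src _ _ x).symm | exact (tgt_tgt _ _ x).symm

end

end CodiscCell

def codiscAboveGlob (n : ℕ) (X : GlobularSet) : GlobularSet where
  obj g := CodiscCell n X g.unop.n
  map u := ↾(CodiscCell.act u.unop)
  map_id _ := rfl
  map_comp u v := by ext x; exact CodiscCell.act_comp v.unop u.unop x

namespace CodiscCell

section

variable {n : ℕ} {X : GlobularSet} {k j : ℕ} {h : k < j} {hj : n < j} {a b : cell X n}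
  {hp : Parallel X n a b}

theorem src_high_of_lt_n (hk : k < n) : src h (high hj a b hp) = low hk.le (csrc X hk a) := by
  rw [src_high_of_le hk.le, csrcLE_of_lt X _ hk]

theorem tgt_high_of_lt_n (hk : k < n) : tgt h (high hj a b hp) = low hk.le (ctgt X hk b) := by
  rw [tgt_high_of_le hk.le, ctgtLE_of_lt X _ hk]

theorem src_high_self {h : n < j} : src h (high hj a b hp) = low le_rfl a := by
  rw [src_high_of_le le_rfl, csrcLE_self]

theorem tgt_high_self {h : n < j} : tgt h (high hj a b hp) = low le_rfl b := by
  rw [tgt_high_of_le le_rfl, ctgtLE_self]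

end

section

variable {n : ℕ} {A : StrictOmegaCat}

open Classical in
/-- Composition in `codiscAbove n A`. Above dimension `n`, a composite along `k < n` is computed
componentwise and one along `n` glues the pairs, while along `k > n` composable cells are equal.
The remaining branches are junk values for non-composable cells. -/
noncomputable def comp {k m : ℕ} (h : k < m) :
    CodiscCell n A.C m → CodiscCell n A.C m → CodiscCell n A.C m
  | low hm a, low _ b => low hm (A.comp h a b)
  | high hm a b hp, high _ a' b' hp' =>
      if hk : k < n then
        if hq : Parallel A.C n (A.comp hk a a') (A.comp hk b b') then
          high hm (A.comp hk a a') (A.comp hk b b') hq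
        else high hm a b hp
      else if k = n then
        if hq : Parallel A.C n a b' then high hm a b' hq else high hm a b hp
      else high hm a' b' hp'
  | x, _ => x

def ident (m : ℕ) : CodiscCell n A.C m → CodiscCell n A.C (m + 1)
  | low hm a =>
      if h : m + 1 ≤ n then low h (A.ident m a)
      else -- here `m = n`, and `csrcLE` at `n ≤ m` spares a cast
        high (by omega) (csrcLE A.C (by omega : n ≤ m) a) (csrcLE A.C (by omega : n ≤ m) a)
          (parallel_refl _)
  | high hm a b hp => high (by omega) a b hp

variable {k m : ℕ} {h : k < m}

theorem comp_low {hm hm' : m ≤ n} {a b : cell A.C m} :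
    comp h (low hm a) (low hm' b) = low hm (A.comp h a b) := rfl

section High

variable {hm hm' : n < m} {a b a' b' : cell A.C n} {hp : Parallel A.C n a b}
  {hp' : Parallel A.C n a' b'}

theorem comp_high_of_lt_of_parallel (hk : k < n)
    (hq : Parallel A.C n (A.comp hk a a') (A.comp hk b b')) :
    comp h (high hm a b hp) (high hm' a' b' hp')
      = high hm (A.comp hk a a') (A.comp hk b b') hq := by
  simp only [comp, dif_pos hk, dif_pos hq]

theorem comp_high_of_lt (hk : k < n) (e : ctgt A.C hk a = csrc A.C hk a')
    (e' : ctgt A.C hk b = csrc A.C hk b') :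
    comp h (high hm a b hp) (high hm' a' b' hp')
      = high hm (A.comp hk a a') (A.comp hk b b') (hp.comp hk hp' e e') :=
  comp_high_of_lt_of_parallel hk _

theorem comp_high_of_eq (hk : k = n) (e : b = a') :
    comp h (high hm a b hp) (high hm' a' b' hp') = high hm a b' (hp.trans (e ▸ hp')) := by
  simp only [comp, dif_neg (not_lt.mpr hk.ge), if_pos hk, dif_pos (hp.trans (e ▸ hp'))]

theorem comp_high_of_gt (hk : n < k) :
    comp h (high hm a b hp) (high hm' a' b' hp') = high hm a' b' hp' := by
  simp only [comp, dif_neg (not_lt.mpr hk.le), if_neg hk.ne']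

end High

theorem ident_low_of_lt {hm : m ≤ n} (h' : m + 1 ≤ n) {a : cell A.C m} :
    ident m (low hm a) = low h' (A.ident m a) := dif_pos h'

theorem ident_low_self {hm : n ≤ n} {a : cell A.C n} :
    ident n (low hm a) = high (Nat.lt_succ_self n) a a (parallel_refl a) := by
  simp only [ident, dif_neg (Nat.not_succ_le_self n)]
  exact high_congr _ _ (csrcLE_self A.C _ a) (csrcLE_self A.C _ a)

theorem ident_high {hm : n < m} {a b : cell A.C n} {hp : Parallel A.C n a b} :
    ident m (high hm a b hp) = high (hm.trans (Nat.lt_succ_self m)) a b hp := rfl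

section Composable

variable {hm hm' : n < m} {a b a' b' : cell A.C n} {hp : Parallel A.C n a b}
  {hp' : Parallel A.C n a' b'}

theorem ctgt_eq_csrc_of_low {hm hm' : m ≤ n} {a b : cell A.C m}
    (hc : tgt h (low hm a) = src h (low hm' b)) : ctgt A.C h a = csrc A.C h b :=
  low_injective hc

theorem ctgt_eq_csrc_of_high_lt (hk : k < n)
    (hc : tgt h (high hm a b hp) = src h (high hm' a' b' hp')) :
    ctgt A.C hk a = csrc A.C hk a' ∧ ctgt A.C hk b = csrc A.C hk b' := by
  rw [tgt_high_of_lt_n hk, src_high_of_lt_n hk] at hc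
  have e := low_injective hc
  exact ⟨hp.ctgt_eq hk ▸ e, e ▸ hp'.csrc_eq hk⟩

theorem eq_of_high_composable_self {h : n < m}
    (hc : tgt h (high hm a b hp) = src h (high hm' a' b' hp')) : b = a' := by
  rw [tgt_high_self, src_high_self] at hc
  exact low_injective hc

theorem eq_of_high_composable_gt (hk : n < k)
    (hc : tgt h (high hm a b hp) = src h (high hm' a' b' hp')) : a = a' ∧ b = b' := by
  rw [tgt_high_of_lt hk, src_high_of_lt hk] at hc
  exact high_injective hc

end Composable

end

section

variable {n : ℕ} {A : StrictOmegaCat} {j k m : ℕ}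

theorem src_comp (h : k < m) (x y : CodiscCell n A.C m) (hc : tgt h x = src h y) :
    src h (comp h x y) = src h x := by
  rcases le_or_gt m n with hm | hm
  · obtain ⟨a, rfl⟩ := exists_eq_low hm x
    obtain ⟨b, rfl⟩ := exists_eq_low hm y
    rw [comp_low, src_low, src_low]
    exact low_congr _ _ (A.src_comp h a b (ctgt_eq_csrc_of_low hc))
  obtain ⟨a, b, hp, rfl⟩ := exists_eq_high hm x
  obtain ⟨a', b', hp', rfl⟩ := exists_eq_high hm y
  rcases lt_trichotomy k n with hk | rfl | hk
  · obtain ⟨e, e'⟩ := ctgt_eq_csrc_of_high_lt hk hc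
    rw [comp_high_of_lt hk e e', src_high_of_lt_n hk,
      src_high_of_lt_n hk]
    exact low_congr _ _ (A.src_comp hk a a' e)
  · rw [comp_high_of_eq rfl (eq_of_high_composable_self hc), src_high_self,
      src_high_self]
  · obtain ⟨e, e'⟩ := eq_of_high_composable_gt hk hc
    rw [comp_high_of_gt hk, src_high_of_lt hk,
      src_high_of_lt hk]
    exact high_congr _ _ e.symm e'.symm

theorem tgt_comp (h : k < m) (x y : CodiscCell n A.C m) (hc : tgt h x = src h y) :
    tgt h (comp h x y) = tgt h y := by
  rcases le_or_gt m n with hm | hm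
  · obtain ⟨a, rfl⟩ := exists_eq_low hm x
    obtain ⟨b, rfl⟩ := exists_eq_low hm y
    rw [comp_low, tgt_low, tgt_low]
    exact low_congr _ _ (A.tgt_comp h a b (ctgt_eq_csrc_of_low hc))
  obtain ⟨a, b, hp, rfl⟩ := exists_eq_high hm x
  obtain ⟨a', b', hp', rfl⟩ := exists_eq_high hm y
  rcases lt_trichotomy k n with hk | rfl | hk
  · obtain ⟨e, e'⟩ := ctgt_eq_csrc_of_high_lt hk hc
    rw [comp_high_of_lt hk e e', tgt_high_of_lt_n hk,
      tgt_high_of_lt_n hk]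
    exact low_congr _ _ (A.tgt_comp hk b b' e')
  · rw [comp_high_of_eq rfl (eq_of_high_composable_self hc), tgt_high_self,
      tgt_high_self]
  · rw [comp_high_of_gt hk]

theorem bdry_comp_lower (hj : j < k) (h : k < m) (x y : CodiscCell n A.C m)
    (hc : tgt h x = src h y) :
    src (hj.trans h) (comp h x y) = src (hj.trans h) x ∧
      tgt (hj.trans h) (comp h x y) = tgt (hj.trans h) x :=
  ⟨by rw [← src_src hj h, src_comp h x y hc, src_src],
    by rw [← tgt_src hj h, src_comp h x y hc, tgt_src]⟩

theorem src_comp_mid (h : k < m) (hkj : k < j) (hjm : j < m) (x y : CodiscCell n A.C m)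
    (hc : tgt h x = src h y) : src hjm (comp h x y) = comp hkj (src hjm x) (src hjm y) := by
  rcases le_or_gt m n with hm | hm
  · obtain ⟨a, rfl⟩ := exists_eq_low hm x
    obtain ⟨b, rfl⟩ := exists_eq_low hm y
    rw [comp_low, src_low, src_low, src_low, comp_low]
    exact low_congr _ _ (A.bdry_comp_mid h hkj hjm a b (ctgt_eq_csrc_of_low hc)).1
  obtain ⟨a, b, hp, rfl⟩ := exists_eq_high hm x
  obtain ⟨a', b', hp', rfl⟩ := exists_eq_high hm y
  rcases lt_trichotomy k n with hk | rfl | hk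
  · obtain ⟨e, e'⟩ := ctgt_eq_csrc_of_high_lt hk hc
    rw [comp_high_of_lt hk e e']
    rcases lt_trichotomy j n with hjn | rfl | hjn
    · rw [src_high_of_lt_n hjn, src_high_of_lt_n hjn,
        src_high_of_lt_n hjn, comp_low]
      exact low_congr _ _ (A.bdry_comp_mid hk hkj hjn a a' e).1
    · rw [src_high_self, src_high_self, src_high_self, comp_low]
    · rw [src_high_of_lt hjn, src_high_of_lt hjn,
        src_high_of_lt hjn, comp_high_of_lt hk e e']
  · have e := eq_of_high_composable_self hc
    rw [comp_high_of_eq rfl e, src_high_of_lt hkj,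
      src_high_of_lt hkj, src_high_of_lt hkj,
      comp_high_of_eq rfl e]
  · rw [comp_high_of_gt hk, src_high_of_lt (hk.trans hkj),
      src_high_of_lt (hk.trans hkj), comp_high_of_gt hk]

theorem tgt_comp_mid (h : k < m) (hkj : k < j) (hjm : j < m) (x y : CodiscCell n A.C m)
    (hc : tgt h x = src h y) : tgt hjm (comp h x y) = comp hkj (tgt hjm x) (tgt hjm y) := by
  rcases le_or_gt m n with hm | hm
  · obtain ⟨a, rfl⟩ := exists_eq_low hm x
    obtain ⟨b, rfl⟩ := exists_eq_low hm y
    rw [comp_low, tgt_low, tgt_low, tgt_low, comp_low]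
    exact low_congr _ _ (A.bdry_comp_mid h hkj hjm a b (ctgt_eq_csrc_of_low hc)).2
  obtain ⟨a, b, hp, rfl⟩ := exists_eq_high hm x
  obtain ⟨a', b', hp', rfl⟩ := exists_eq_high hm y
  rcases lt_trichotomy k n with hk | rfl | hk
  · obtain ⟨e, e'⟩ := ctgt_eq_csrc_of_high_lt hk hc
    rw [comp_high_of_lt hk e e']
    rcases lt_trichotomy j n with hjn | rfl | hjn
    · rw [tgt_high_of_lt_n hjn, tgt_high_of_lt_n hjn,
        tgt_high_of_lt_n hjn, comp_low]
      exact low_congr _ _ (A.bdry_comp_mid hk hkj hjn b b' e').2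
    · rw [tgt_high_self, tgt_high_self, tgt_high_self, comp_low]
    · rw [tgt_high_of_lt hjn, tgt_high_of_lt hjn,
        tgt_high_of_lt hjn, comp_high_of_lt hk e e']
  · have e := eq_of_high_composable_self hc
    rw [comp_high_of_eq rfl e, tgt_high_of_lt hkj,
      tgt_high_of_lt hkj, tgt_high_of_lt hkj,
      comp_high_of_eq rfl e]
  · rw [comp_high_of_gt hk, tgt_high_of_lt (hk.trans hkj),
      tgt_high_of_lt (hk.trans hkj), comp_high_of_gt hk]

end

section

variable {n : ℕ} {A : StrictOmegaCat} {j k m : ℕ}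

theorem comp_of_gt (h : k < m) (hm : n < m) (hk : n < k) (x y : CodiscCell n A.C m) :
    comp h x y = y := by
  obtain ⟨a, b, hp, rfl⟩ := exists_eq_high hm x
  obtain ⟨a', b', hp', rfl⟩ := exists_eq_high hm y
  exact comp_high_of_gt hk

theorem src_ident (m : ℕ) : ∀ x : CodiscCell n A.C m, src (Nat.lt_succ_self m) (ident m x) = x
  | low hm a => by
    by_cases h' : m + 1 ≤ n
    · rw [ident_low_of_lt h', src_low]
      exact low_congr _ _ (A.src_ident m a)
    · obtain rfl : m = n := by omega
      rw [ident_low_self, src_high_self]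
  | high hm a b hp => by rw [ident_high, src_high_of_lt hm]

theorem tgt_ident (m : ℕ) : ∀ x : CodiscCell n A.C m, tgt (Nat.lt_succ_self m) (ident m x) = x
  | low hm a => by
    by_cases h' : m + 1 ≤ n
    · rw [ident_low_of_lt h', tgt_low]
      exact low_congr _ _ (A.tgt_ident m a)
    · obtain rfl : m = n := by omega
      rw [ident_low_self, tgt_high_self]
  | high hm a b hp => by rw [ident_high, tgt_high_of_lt hm]

theorem comp_assoc (h : k < m) (x y z : CodiscCell n A.C m) (hxy : tgt h x = src h y)
    (hyz : tgt h y = src h z) : comp h (comp h x y) z = comp h x (comp h y z) := by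
  rcases le_or_gt m n with hm | hm
  · obtain ⟨a, rfl⟩ := exists_eq_low hm x
    obtain ⟨b, rfl⟩ := exists_eq_low hm y
    obtain ⟨c, rfl⟩ := exists_eq_low hm z
    simp only [comp_low]
    exact low_congr _ _ (A.comp_assoc h a b c (ctgt_eq_csrc_of_low hxy)
      (ctgt_eq_csrc_of_low hyz))
  rcases lt_or_ge n k with hk | hk
  · simp only [comp_of_gt h hm hk]
  obtain ⟨a₁, b₁, hp₁, rfl⟩ := exists_eq_high hm x
  obtain ⟨a₂, b₂, hp₂, rfl⟩ := exists_eq_high hm y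
  obtain ⟨a₃, b₃, hp₃, rfl⟩ := exists_eq_high hm z
  rcases hk.lt_or_eq with hk | rfl
  · obtain ⟨e₁, e₁'⟩ := ctgt_eq_csrc_of_high_lt hk hxy
    obtain ⟨e₂, e₂'⟩ := ctgt_eq_csrc_of_high_lt hk hyz
    rw [comp_high_of_lt hk e₁ e₁', comp_high_of_lt hk e₂ e₂',
      comp_high_of_lt hk (by rwa [A.tgt_comp hk a₁ a₂ e₁])
        (by rwa [A.tgt_comp hk b₁ b₂ e₁']),
      comp_high_of_lt hk (by rwa [A.src_comp hk a₂ a₃ e₂])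
        (by rwa [A.src_comp hk b₂ b₃ e₂'])]
    exact high_congr _ _ (A.comp_assoc hk a₁ a₂ a₃ e₁ e₂) (A.comp_assoc hk b₁ b₂ b₃ e₁' e₂')
  · have e₁ := eq_of_high_composable_self hxy
    have e₂ := eq_of_high_composable_self hyz
    rw [comp_high_of_eq rfl e₁, comp_high_of_eq rfl e₂,
      comp_high_of_eq rfl e₂, comp_high_of_eq rfl e₁]

theorem ident_comp (h : k < m) (x y : CodiscCell n A.C m) (hc : tgt h x = src h y) :
    ident m (comp h x y) = comp (h.trans (Nat.lt_succ_self m)) (ident m x) (ident m y) := by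
  have h' := h.trans (Nat.lt_succ_self m)
  rcases le_or_gt m n with hm | hm
  · obtain ⟨a, rfl⟩ := exists_eq_low hm x
    obtain ⟨b, rfl⟩ := exists_eq_low hm y
    have e := ctgt_eq_csrc_of_low hc
    rcases Nat.lt_or_eq_of_le hm with hm' | rfl
    · simp only [comp_low, ident_low_of_lt hm']
      exact low_congr _ _ (A.ident_comp h a b e)
    · simp only [comp_low, ident_low_self]
      rw [comp_high_of_lt h e e]
  rcases lt_or_ge n k with hk | hk
  · rw [comp_of_gt h hm hk, comp_of_gt h' (hm.trans (Nat.lt_succ_self m)) hk]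
  obtain ⟨a, b, hp, rfl⟩ := exists_eq_high hm x
  obtain ⟨a', b', hp', rfl⟩ := exists_eq_high hm y
  rcases hk.lt_or_eq with hk | rfl
  · obtain ⟨e, e'⟩ := ctgt_eq_csrc_of_high_lt hk hc
    rw [comp_high_of_lt hk e e']
    simp only [ident_high]
    rw [comp_high_of_lt hk e e']
  · have e := eq_of_high_composable_self hc
    rw [comp_high_of_eq rfl e]
    simp only [ident_high]
    rw [comp_high_of_eq rfl e]

end

section

variable {n : ℕ} {A : StrictOmegaCat} {j k m : ℕ}

theorem interchange_high_of_lt (hj : j < k) (hk : k < m) (hkn : k < n) (hm : n < m)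
    (x y z w : CodiscCell n A.C m)
    (hxy : tgt hk x = src hk y) (hzw : tgt hk z = src hk w)
    (hxz : tgt (hj.trans hk) x = src (hj.trans hk) z) :
    comp (hj.trans hk) (comp hk x y) (comp hk z w)
      = comp hk (comp (hj.trans hk) x z) (comp (hj.trans hk) y w) := by
  obtain ⟨a₁, b₁, hp₁, rfl⟩ := exists_eq_high hm x
  obtain ⟨a₂, b₂, hp₂, rfl⟩ := exists_eq_high hm y
  obtain ⟨a₃, b₃, hp₃, rfl⟩ := exists_eq_high hm z
  obtain ⟨a₄, b₄, hp₄, rfl⟩ := exists_eq_high hm w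
  have hjn := hj.trans hkn
  obtain ⟨e₁₂, e₁₂'⟩ := ctgt_eq_csrc_of_high_lt hkn hxy
  obtain ⟨e₃₄, e₃₄'⟩ := ctgt_eq_csrc_of_high_lt hkn hzw
  obtain ⟨e₁₃, e₁₃'⟩ := ctgt_eq_csrc_of_high_lt hjn hxz
  have e₂₄ : ctgt A.C hjn a₂ = csrc A.C hjn a₄ := by
    rw [← ctgt_csrc A.C hj hkn, ← e₁₂, ctgt_ctgt, ← csrc_csrc A.C hj hkn, ← e₃₄, csrc_ctgt]
    exact e₁₃
  have e₂₄' : ctgt A.C hjn b₂ = csrc A.C hjn b₄ := by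
    rw [← ctgt_csrc A.C hj hkn, ← e₁₂', ctgt_ctgt, ← csrc_csrc A.C hj hkn, ← e₃₄', csrc_ctgt]
    exact e₁₃'
  have lower := fun {u v : cell A.C n} (e : ctgt A.C hkn u = csrc A.C hkn v) =>
    A.bdry_comp_lower hj hkn u v e
  have mid := fun {u v : cell A.C n} (e : ctgt A.C hjn u = csrc A.C hjn v) =>
    A.bdry_comp_mid hjn hj hkn u v e
  rw [comp_high_of_lt hkn e₁₂ e₁₂', comp_high_of_lt hkn e₃₄ e₃₄',
    comp_high_of_lt hjn (by rw [(lower e₁₂).2, (lower e₃₄).1, e₁₃])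
      (by rw [(lower e₁₂').2, (lower e₃₄').1, e₁₃']),
    comp_high_of_lt hjn e₁₃ e₁₃', comp_high_of_lt hjn e₂₄ e₂₄',
    comp_high_of_lt hkn (by rw [(mid e₁₃).2, (mid e₂₄).1, e₁₂, e₃₄])
      (by rw [(mid e₁₃').2, (mid e₂₄').1, e₁₂', e₃₄'])]
  exact high_congr _ _ (A.interchange hj hkn a₁ a₂ a₃ a₄ e₁₂ e₃₄ e₁₃)
    (A.interchange hj hkn b₁ b₂ b₃ b₄ e₁₂' e₃₄' e₁₃')

theorem interchange_high_self (hj : j < n) (hk : n < m) (x y z w : CodiscCell n A.C m)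
    (hxy : tgt hk x = src hk y) (hzw : tgt hk z = src hk w)
    (hxz : tgt (hj.trans hk) x = src (hj.trans hk) z) :
    comp (hj.trans hk) (comp hk x y) (comp hk z w)
      = comp hk (comp (hj.trans hk) x z) (comp (hj.trans hk) y w) := by
  obtain ⟨a₁, b₁, hp₁, rfl⟩ := exists_eq_high hk x
  obtain ⟨a₂, b₂, hp₂, rfl⟩ := exists_eq_high hk y
  obtain ⟨a₃, b₃, hp₃, rfl⟩ := exists_eq_high hk z
  obtain ⟨a₄, b₄, hp₄, rfl⟩ := exists_eq_high hk w
  have e₁₂ := eq_of_high_composable_self hxy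
  have e₃₄ := eq_of_high_composable_self hzw
  obtain ⟨e₁₃, e₁₃'⟩ := ctgt_eq_csrc_of_high_lt hj hxz
  have e₂₄ : ctgt A.C hj a₂ = csrc A.C hj a₄ := by rw [← e₁₂, ← e₃₄]; exact e₁₃'
  have e₂₄' : ctgt A.C hj b₂ = csrc A.C hj b₄ := by
    rw [← hp₂.ctgt_eq hj, ← hp₄.csrc_eq hj]; exact e₂₄
  rw [comp_high_of_eq rfl e₁₂, comp_high_of_eq rfl e₃₄,
    comp_high_of_lt hj e₁₃ e₂₄', comp_high_of_lt hj e₁₃ e₁₃',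
    comp_high_of_lt hj e₂₄ e₂₄', comp_high_of_eq rfl (by rw [e₁₂, e₃₄])]

theorem interchange (hj : j < k) (hk : k < m) (x y z w : CodiscCell n A.C m)
    (hxy : tgt hk x = src hk y) (hzw : tgt hk z = src hk w)
    (hxz : tgt (hj.trans hk) x = src (hj.trans hk) z) :
    comp (hj.trans hk) (comp hk x y) (comp hk z w)
      = comp hk (comp (hj.trans hk) x z) (comp (hj.trans hk) y w) := by
  rcases le_or_gt m n with hm | hm
  · obtain ⟨a₁, rfl⟩ := exists_eq_low hm x
    obtain ⟨a₂, rfl⟩ := exists_eq_low hm y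
    obtain ⟨a₃, rfl⟩ := exists_eq_low hm z
    obtain ⟨a₄, rfl⟩ := exists_eq_low hm w
    simp only [comp_low]
    exact low_congr _ _ (A.interchange hj hk a₁ a₂ a₃ a₄ (ctgt_eq_csrc_of_low hxy)
      (ctgt_eq_csrc_of_low hzw) (ctgt_eq_csrc_of_low hxz))
  rcases lt_trichotomy k n with hkn | rfl | hkn
  · exact interchange_high_of_lt hj hk hkn hm x y z w hxy hzw hxz
  · exact interchange_high_self hj hk x y z w hxy hzw hxz
  · rw [comp_of_gt hk hm hkn, comp_of_gt hk hm hkn, comp_of_gt hk hm hkn]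

end

end CodiscCell

theorem PreOmega.iterId_self (B : PreOmega) {k : ℕ} (h : k ≤ k) (x : cell B.C k) :
    B.iterId k h x = x := by
  cases k with
  | zero => rfl
  | succ k => exact dif_pos rfl

theorem PreOmega.iterId_succ (B : PreOmega) {k m : ℕ} (h : k ≤ m + 1) (hk : k ≤ m)
    (x : cell B.C k) : B.iterId (m + 1) h x = B.ident m (B.iterId m hk x) :=
  dif_neg (by omega)

noncomputable def codiscAbovePre (n : ℕ) (A : StrictOmegaCat) : PreOmega where
  C := codiscAboveGlob n A.C
  comp h x y := CodiscCell.comp h x y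
  ident m x := CodiscCell.ident m x

namespace CodiscCell

section

variable {n : ℕ} {A : StrictOmegaCat} {k m : ℕ}

theorem iterId_high (h : k ≤ m) (hk : n < k) {a b : cell A.C n} (hp : Parallel A.C n a b)
    (hm : n < m) : (codiscAbovePre n A).iterId m h (high hk a b hp) = high hm a b hp := by
  induction m with
  | zero => omega
  | succ m ih =>
    rcases h.lt_or_eq with h' | rfl
    · erw [PreOmega.iterId_succ _ _ (Nat.le_of_lt_succ h'), ih _ (by omega)]
      rfl
    · exact PreOmega.iterId_self _ _ _

theorem iterId_low (h : k ≤ m) (hk : k ≤ n) (hm : m ≤ n) (a : cell A.C k) :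
    (codiscAbovePre n A).iterId m h (low hk a) = low hm (A.toPreOmega.iterId m h a) := by
  induction m with
  | zero =>
    obtain rfl : k = 0 := by omega
    rfl
  | succ m ih =>
    rcases h.lt_or_eq with h' | rfl
    · erw [PreOmega.iterId_succ _ _ (Nat.le_of_lt_succ h'),
        PreOmega.iterId_succ _ _ (Nat.le_of_lt_succ h'), ih _ (by omega)]
      exact ident_low_of_lt (hm := by omega) hm
    · erw [PreOmega.iterId_self, PreOmega.iterId_self]

theorem iterId_low_of_lt (h : k ≤ m) (hk : k ≤ n) (hm : n < m) (a : cell A.C k) :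
    (codiscAbovePre n A).iterId m h (low hk a)
      = high hm (A.toPreOmega.iterId n hk a) (A.toPreOmega.iterId n hk a) (parallel_refl _) := by
  induction m with
  | zero => omega
  | succ m ih =>
    erw [PreOmega.iterId_succ _ _ (by omega)]
    rcases (Nat.le_of_lt_succ hm).lt_or_eq with hm' | rfl
    · erw [ih _ hm']
      rfl
    · erw [iterId_low _ hk le_rfl]
      exact ident_low_self (hm := le_rfl)

end

section

variable {n : ℕ} {A : StrictOmegaCat} {k m : ℕ}

theorem comp_unit_left (h : k < m) (x : CodiscCell n A.C m) :
    comp h ((codiscAbovePre n A).iterId m h.le (src h x)) x = x := by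
  rcases le_or_gt m n with hm | hm
  · obtain ⟨a, rfl⟩ := exists_eq_low hm x
    rw [src_low, iterId_low _ _ hm, comp_low]
    exact low_congr _ _ (A.comp_unit_left h a)
  rcases lt_or_ge n k with hk | hk
  · exact comp_of_gt h hm hk _ x
  obtain ⟨a, b, hp, rfl⟩ := exists_eq_high hm x
  rcases hk.lt_or_eq with hk | rfl
  · have ha : A.comp hk (A.toPreOmega.iterId n hk.le (csrc A.C hk a)) a = a :=
      A.comp_unit_left hk a
    have hb : A.comp hk (A.toPreOmega.iterId n hk.le (csrc A.C hk a)) b = b := by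
      rw [hp.csrc_eq hk]; exact A.comp_unit_left hk b
    rw [src_high_of_lt_n hk, iterId_low_of_lt _ _ hm,
      comp_high_of_lt_of_parallel hk (by rw [ha, hb]; exact hp)]
    exact high_congr _ _ ha hb
  · rw [src_high_self, iterId_low_of_lt _ _ hm, PreOmega.iterId_self,
      comp_high_of_eq rfl rfl]

theorem comp_unit_right (h : k < m) (x : CodiscCell n A.C m) :
    comp h x ((codiscAbovePre n A).iterId m h.le (tgt h x)) = x := by
  rcases le_or_gt m n with hm | hm
  · obtain ⟨a, rfl⟩ := exists_eq_low hm x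
    rw [tgt_low, iterId_low _ _ hm, comp_low]
    exact low_congr _ _ (A.comp_unit_right h a)
  obtain ⟨a, b, hp, rfl⟩ := exists_eq_high hm x
  rcases lt_trichotomy k n with hk | rfl | hk
  · have ha : A.comp hk a (A.toPreOmega.iterId n hk.le (ctgt A.C hk b)) = a := by
      rw [← hp.ctgt_eq hk]; exact A.comp_unit_right hk a
    have hb : A.comp hk b (A.toPreOmega.iterId n hk.le (ctgt A.C hk b)) = b :=
      A.comp_unit_right hk b
    rw [tgt_high_of_lt_n hk, iterId_low_of_lt _ _ hm,
      comp_high_of_lt_of_parallel hk (by rw [ha, hb]; exact hp)]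
    exact high_congr _ _ ha hb
  · rw [tgt_high_self, iterId_low_of_lt _ _ hm, PreOmega.iterId_self,
      comp_high_of_eq rfl rfl]
  · refine (comp_of_gt h hm hk _ _).trans ?_
    erw [tgt_high_of_lt hk, iterId_high _ _ _ hm]

end

end CodiscCell

noncomputable def codiscAbove (n : ℕ) (A : StrictOmegaCat) : StrictOmegaCat where
  toPreOmega := codiscAbovePre n A
  src_comp := CodiscCell.src_comp
  tgt_comp := CodiscCell.tgt_comp
  bdry_comp_lower := CodiscCell.bdry_comp_lower
  bdry_comp_mid h hkj hjm x y hc :=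
    ⟨CodiscCell.src_comp_mid h hkj hjm x y hc, CodiscCell.tgt_comp_mid h hkj hjm x y hc⟩
  src_ident := CodiscCell.src_ident
  tgt_ident := CodiscCell.tgt_ident
  comp_assoc := CodiscCell.comp_assoc
  comp_unit_left := CodiscCell.comp_unit_left
  comp_unit_right := CodiscCell.comp_unit_right
  ident_comp := CodiscCell.ident_comp
  interchange := CodiscCell.interchange

namespace CodiscCell

variable {n : ℕ} {X : GlobularSet}

def ofCell (n : ℕ) {j : ℕ} (x : cell X j) : CodiscCell n X j :=
  if hj : j ≤ n then low hj x
  else high (not_le.mp hj) (csrc X (not_le.mp hj) x) (ctgt X (not_le.mp hj) x)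
    (parallel_csrc_ctgt _ x)

theorem ofCell_of_le {j : ℕ} (hj : j ≤ n) (x : cell X j) : ofCell n x = low hj x := dif_pos hj

theorem ofCell_of_lt {j : ℕ} (hj : n < j) (x : cell X j) :
    ofCell n x = high hj (csrc X hj x) (ctgt X hj x) (parallel_csrc_ctgt _ x) :=
  dif_neg (not_le.mpr hj)

variable {k j : ℕ} (h : k < j) (x : cell X j)

theorem src_ofCell : src h (ofCell n x) = ofCell n (csrc X h x) := by
  rcases le_or_gt j n with hj | hj
  · rw [ofCell_of_le hj, ofCell_of_le (h.le.trans hj), src_low]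
  rw [ofCell_of_lt hj]
  rcases le_or_gt k n with hk | hk
  · rw [src_high_of_le hk, ofCell_of_le hk, csrcLE_csrc]
  · rw [src_high_of_lt hk, ofCell_of_lt hk]
    exact high_congr _ _ (csrc_csrc X hk h x).symm (ctgt_csrc X hk h x).symm

theorem tgt_ofCell : tgt h (ofCell n x) = ofCell n (ctgt X h x) := by
  rcases le_or_gt j n with hj | hj
  · rw [ofCell_of_le hj, ofCell_of_le (h.le.trans hj), tgt_low]
  rw [ofCell_of_lt hj]
  rcases le_or_gt k n with hk | hk
  · rw [tgt_high_of_le hk, ofCell_of_le hk, ctgtLE_ctgt]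
  · rw [tgt_high_of_lt hk, ofCell_of_lt hk]
    exact high_congr _ _ (csrc_ctgt X hk h x).symm (ctgt_ctgt X hk h x).symm

theorem act_ofCell {a b : Globe} (u : GlobeHom a b) (x : cell X b.n) :
    act u (ofCell n x) = ofCell n (X.map (Quiver.Hom.op u) x) := by
  cases u with
  | id => exact congrArg (ofCell n) (cellMap_self X (.id _) x).symm
  | src h => exact src_ofCell h x
  | tgt h => exact tgt_ofCell h x

variable {Y : GlobularSet} (w : X ⟶ Y)

def map : ∀ {j : ℕ}, CodiscCell n X j → CodiscCell n Y j
  | _, low h a => low h (w.app _ a)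
  | _, high h a b hp => high h (w.app (op ⟨n⟩) a) (w.app (op ⟨n⟩) b) (hp.map w)

theorem src_map : ∀ y : CodiscCell n X j, src h (map w y) = map w (src h y)
  | low hj a => by simp only [map, src_low, app_csrc]
  | high hj a b hp => by
    by_cases hk : k ≤ n
    · simp only [map, src_high_of_le hk, app_cellMap]
    · simp only [map, src_high_of_lt (not_le.mp hk)]

theorem tgt_map : ∀ y : CodiscCell n X j, tgt h (map w y) = map w (tgt h y)
  | low hj a => by simp only [map, tgt_low, app_ctgt]
  | high hj a b hp => by
    by_cases hk : k ≤ n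
    · simp only [map, tgt_high_of_le hk, app_cellMap]
    · simp only [map, tgt_high_of_lt (not_le.mp hk)]

theorem act_map {a b : Globe} (u : GlobeHom a b) (y : CodiscCell n X b.n) :
    act u (map w y) = map w (act u y) := by
  cases u with
  | id => rfl
  | src h => exact src_map h w y
  | tgt h => exact tgt_map h w y

theorem map_ofCell {j : ℕ} (x : cell X j) : map w (ofCell n x) = ofCell n (w.app _ x) := by
  rcases le_or_gt j n with hj | hj
  · rw [ofCell_of_le hj, ofCell_of_le hj]; rfl
  · rw [ofCell_of_lt hj, ofCell_of_lt hj]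
    exact high_congr _ _ (app_csrc w hj x) (app_ctgt w hj x)

end CodiscCell

def codiscAboveGlobFunctor (n : ℕ) : GlobularSet ⥤ GlobularSet where
  obj := codiscAboveGlob n
  map w :=
    { app _ := ↾(CodiscCell.map w)
      naturality _ _ u := by ext y; exact (CodiscCell.act_map w u.unop y).symm }
  map_id _ := by ext _ (_ | _) <;> rfl
  map_comp _ _ := by ext _ (_ | _) <;> rfl

def toCodiscAboveGlob (n : ℕ) : 𝟭 GlobularSet ⟶ codiscAboveGlobFunctor n where
  app X :=
    { app _ := ↾(CodiscCell.ofCell n)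
      naturality _ _ u := by ext x; exact (CodiscCell.act_ofCell u.unop x).symm }
  naturality _ _ w := by ext _ x; exact (CodiscCell.map_ofCell w x).symm

namespace CodiscCell

variable {n : ℕ} {A B : StrictOmegaCat} {k m : ℕ}

theorem ofCell_comp (h : k < m) (x y : cell A.C m) (hc : ctgt A.C h x = csrc A.C h y) :
    ofCell n (A.comp h x y) = comp h (ofCell n x) (ofCell n y) := by
  rcases le_or_gt m n with hm | hm
  · simp only [ofCell_of_le hm, comp_low]
  simp only [ofCell_of_lt hm]
  rcases lt_trichotomy k n with hk | rfl | hk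
  · have e : ctgt A.C hk (csrc A.C hm x) = csrc A.C hk (csrc A.C hm y) := by
      rw [ctgt_csrc, csrc_csrc]; exact hc
    have e' : ctgt A.C hk (ctgt A.C hm x) = csrc A.C hk (ctgt A.C hm y) := by
      rw [ctgt_ctgt, csrc_ctgt]; exact hc
    rw [comp_high_of_lt hk e e']
    exact high_congr _ _ (A.bdry_comp_mid h hk hm x y hc).1 (A.bdry_comp_mid h hk hm x y hc).2
  · rw [comp_high_of_eq rfl hc]
    exact high_congr _ _ (A.src_comp h x y hc) (A.tgt_comp h x y hc)
  · rw [comp_high_of_gt hk]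
    have hs := A.bdry_comp_lower hk h x y hc
    refine high_congr _ _ ?_ ?_
    · rw [hs.1, ← csrc_ctgt A.C hk h x, hc, csrc_csrc]
    · rw [hs.2, ← ctgt_ctgt A.C hk h x, hc, ctgt_csrc]

theorem ofCell_ident (m : ℕ) (x : cell A.C m) :
    ofCell n (A.ident m x) = ident m (ofCell n x) := by
  rcases lt_trichotomy m n with hm | rfl | hm
  · rw [ofCell_of_le hm, ofCell_of_le hm.le, ident_low_of_lt hm]
  · rw [ofCell_of_le le_rfl, ofCell_of_lt (Nat.lt_succ_self m), ident_low_self]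
    exact high_congr _ _ (A.src_ident m x) (A.tgt_ident m x)
  · rw [ofCell_of_lt hm, ofCell_of_lt (hm.trans (Nat.lt_succ_self m)), ident_high]
    refine high_congr _ _ ?_ ?_
    · rw [← csrc_csrc A.C hm (Nat.lt_succ_self m), A.src_ident]
    · rw [← ctgt_ctgt A.C hm (Nat.lt_succ_self m), A.tgt_ident]

variable (φ : A ⟶ B)

theorem map_comp (h : k < m) (x y : CodiscCell n A.C m) (hc : tgt h x = src h y) :
    map φ.f (comp h x y) = comp h (map φ.f x) (map φ.f y) := by
  rcases le_or_gt m n with hm | hm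
  · obtain ⟨a, rfl⟩ := exists_eq_low hm x
    obtain ⟨b, rfl⟩ := exists_eq_low hm y
    simp only [map, comp_low, φ.comp_map h a b (ctgt_eq_csrc_of_low hc)]
  obtain ⟨a, b, hp, rfl⟩ := exists_eq_high hm x
  obtain ⟨a', b', hp', rfl⟩ := exists_eq_high hm y
  rcases lt_trichotomy k n with hk | rfl | hk
  · obtain ⟨e, e'⟩ := ctgt_eq_csrc_of_high_lt hk hc
    simp only [map]
    rw [comp_high_of_lt hk e e',
      comp_high_of_lt hk (by rw [← app_ctgt, ← app_csrc, e])
        (by rw [← app_ctgt, ← app_csrc, e'])]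
    exact high_congr _ _ (φ.comp_map hk a a' e) (φ.comp_map hk b b' e')
  · have e := eq_of_high_composable_self hc
    simp only [map]
    rw [comp_high_of_eq rfl e, comp_high_of_eq rfl (congrArg _ e)]
  · simp only [map]
    rw [comp_high_of_gt hk, comp_high_of_gt hk]

theorem map_ident (m : ℕ) : ∀ x : CodiscCell n A.C m, map φ.f (ident m x) = ident m (map φ.f x)
  | low hm a => by
    rcases hm.lt_or_eq with hm' | rfl
    · simp only [map, ident_low_of_lt hm', φ.ident_map]
    · simp only [map, ident_low_self]
  | high hm a b hp => rfl

end CodiscCell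

noncomputable def toCodiscAbove (n : ℕ) (A : StrictOmegaCat) : OmegaHom A (codiscAbove n A) where
  f := (toCodiscAboveGlob n).app A.C
  comp_map := CodiscCell.ofCell_comp
  ident_map := CodiscCell.ofCell_ident

noncomputable def codiscAboveMap (n : ℕ) {A B : StrictOmegaCat} (φ : A ⟶ B) :
    OmegaHom (codiscAbove n A) (codiscAbove n B) where
  f := (codiscAboveGlobFunctor n).map φ.f
  comp_map := CodiscCell.map_comp φ
  ident_map := CodiscCell.map_ident φ

theorem Parallel.of_map {X Y : GlobularSet} {n : ℕ} (w : X ⟶ Y)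
    (hw : ∀ k < n, Function.Injective (w.app (op ⟨k⟩))) {a b : cell X n}
    (hp : Parallel Y n (w.app (op ⟨n⟩) a) (w.app (op ⟨n⟩) b)) : Parallel X n a b := by
  cases n with
  | zero => trivial
  | succ m =>
    exact ⟨hw m (Nat.lt_succ_self m) (by rw [app_csrc, app_csrc, hp.1]),
      hw m (Nat.lt_succ_self m) (by rw [app_ctgt, app_ctgt, hp.2])⟩

namespace CodiscCell

variable {n j : ℕ} {X Y : GlobularSet}

theorem map_bijective {f : X ⟶ Y} (hf : NBijective n f) :
    Function.Bijective (map f : CodiscCell n X j → CodiscCell n Y j) := by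
  rcases le_or_gt j n with hj | hj
  · refine ⟨fun x x' e => ?_, fun y => ?_⟩
    · obtain ⟨a, rfl⟩ := exists_eq_low hj x
      obtain ⟨a', rfl⟩ := exists_eq_low hj x'
      exact low_congr _ _ ((hf j hj).1 (low_injective e))
    · obtain ⟨b, rfl⟩ := exists_eq_low hj y
      obtain ⟨a, rfl⟩ := (hf j hj).2 b
      exact ⟨low hj a, rfl⟩
  · refine ⟨fun x x' e => ?_, fun y => ?_⟩
    · obtain ⟨a, b, hp, rfl⟩ := exists_eq_high hj x
      obtain ⟨a', b', hp', rfl⟩ := exists_eq_high hj x'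
      obtain ⟨ea, eb⟩ := high_injective e
      exact high_congr _ _ ((hf n le_rfl).1 ea) ((hf n le_rfl).1 eb)
    · obtain ⟨a, b, hp, rfl⟩ := exists_eq_high hj y
      obtain ⟨a, rfl⟩ := (hf n le_rfl).2 a
      obtain ⟨b, rfl⟩ := (hf n le_rfl).2 b
      exact ⟨high hj a b (hp.of_map f fun k hk => (hf k hk.le).1), rfl⟩

theorem ofCell_bijective (hj : j ≤ n) :
    Function.Bijective (ofCell n : cell X j → CodiscCell n X j) := by
  refine ⟨fun x x' e => ?_, fun y => ?_⟩
  · rw [ofCell_of_le hj, ofCell_of_le hj] at e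
    exact low_injective e
  · obtain ⟨a, rfl⟩ := exists_eq_low hj y
    exact ⟨a, ofCell_of_le hj a⟩

end CodiscCell

theorem isIso_codiscAboveGlobFunctor_map {n : ℕ} {X Y : GlobularSet} {f : X ⟶ Y}
    (hf : NBijective n f) : IsIso ((codiscAboveGlobFunctor n).map f) := by
  have (g : Globeᵒᵖ) : IsIso (((codiscAboveGlobFunctor n).map f).app g) :=
    (isIso_iff_bijective _).mpr (CodiscCell.map_bijective hf)
  exact NatIso.isIso_of_isIso_app _

section FreeOmegaCat

variable {F : GlobularSet ⥤ StrictOmegaCat} (adj : F ⊣ forgetOmega) (n : ℕ) {X Y : GlobularSet}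
  (f : X ⟶ Y) [IsIso ((codiscAboveGlobFunctor n).map f)]

noncomputable def liftAlong : F.obj Y ⟶ codiscAbove n (F.obj X) :=
  (adj.homEquiv Y _).symm ((toCodiscAboveGlob n).app Y ≫
    inv ((codiscAboveGlobFunctor n).map f) ≫ (codiscAboveGlobFunctor n).map (adj.unit.app X))

theorem map_comp_liftAlong : F.map f ≫ liftAlong adj n f = toCodiscAbove n (F.obj X) := by
  apply (adj.homEquiv X _).injective
  rw [adj.homEquiv_naturality_left, liftAlong, Equiv.apply_symm_apply, adj.homEquiv_unit]
  change _ = adj.unit.app X ≫ (toCodiscAboveGlob n).app (F.obj X).C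
  have hf := (toCodiscAboveGlob n).naturality f
  have hη := (toCodiscAboveGlob n).naturality (adj.unit.app X)
  simp only [Functor.id_map] at hf hη
  rw [reassoc_of% hf]
  erw [IsIso.hom_inv_id_assoc]
  exact hη.symm

theorem liftAlong_comp_codiscAboveMap :
    liftAlong adj n f ≫ codiscAboveMap n (F.map f) = toCodiscAbove n (F.obj Y) := by
  apply (adj.homEquiv Y _).injective
  rw [adj.homEquiv_naturality_right, liftAlong, Equiv.apply_symm_apply, adj.homEquiv_unit]
  change _ ≫ (codiscAboveGlobFunctor n).map (F.map f).f
    = adj.unit.app Y ≫ (toCodiscAboveGlob n).app (F.obj Y).C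
  have hu := adj.unit.naturality f
  have hη := (toCodiscAboveGlob n).naturality (adj.unit.app Y)
  simp only [Functor.id_map] at hu hη
  erw [Category.assoc, Category.assoc, ← Functor.map_comp]
  change _ ≫ _ ≫ (codiscAboveGlobFunctor n).map (adj.unit.app X ≫ (F ⋙ forgetOmega).map f) = _
  erw [← hu, Functor.map_comp, IsIso.inv_hom_id_assoc]
  exact hη.symm

end FreeOmegaCat

theorem nBijective_free_map {F : GlobularSet ⥤ StrictOmegaCat} (adj : F ⊣ forgetOmega) {n : ℕ}
    {X Y : GlobularSet} {f : X ⟶ Y} (hf : NBijective n f) : NBijective n (F.map f).f := by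
  have := isIso_codiscAboveGlobFunctor_map hf
  intro j hj
  let lift := (liftAlong adj n f).f.app (op ⟨j⟩)
  have h₁ : lift ∘ (F.map f).f.app (op ⟨j⟩) = CodiscCell.ofCell n := funext fun x =>
    congrArg (fun φ : OmegaHom _ _ => φ.f.app (op ⟨j⟩) x) (map_comp_liftAlong adj n f)
  have h₂ : CodiscCell.map (F.map f).f ∘ lift = CodiscCell.ofCell n := funext fun y =>
    congrArg (fun φ : OmegaHom _ _ => φ.f.app (op ⟨j⟩) y) (liftAlong_comp_codiscAboveMap adj n f)
  have hr := fun {Z : GlobularSet} => CodiscCell.ofCell_bijective (X := Z) hj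
  have hlift : Function.Bijective lift :=
    ⟨Function.Injective.of_comp (f := CodiscCell.map (F.map f).f) (by rw [h₂]; exact hr.1),
      Function.Surjective.of_comp (by rw [h₁]; exact hr.2)⟩
  exact (hlift.of_comp_iff' _).mp (by rw [h₁]; exact hr)

theorem bijective_snd_of_isPullback {P Q R S : Type} {fst : P ⟶ Q} {snd : P ⟶ R}
    {f : Q ⟶ S} {g : R ⟶ S} (h : IsPullback fst snd f g) (hf : Function.Bijective f) :
    Function.Bijective snd :=
  have := (isIso_iff_bijective f).mpr hf
  (isIso_iff_bijective snd).mp h.isIso_snd_of_isIso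

/-- Let `P` be a globular operad (a monad on globular sets
with a cartesian monad morphism `κ` to the strict ω-category monad `T`).  Then
for every natural number `n`, the functor part of `P` preserves `n`-bijective
morphisms; consequently the free `P`-algebra functor `K = P.free` preserves
`n`-bijective maps (on underlying globular sets). -/
theorem statement16
    (F : GlobularSet ⥤ StrictOmegaCat) (adj : F ⊣ forgetOmega)
    (P : Monad GlobularSet) (κ : P ⟶ adj.toMonad)
    (hκ : ∀ {X Y : GlobularSet} (f : X ⟶ Y),
      IsPullback (κ.app X) (P.map f) ((adj.toMonad : GlobularSet ⥤ GlobularSet).map f)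
        (κ.app Y))
    (n : ℕ) :
    (∀ {X Y : GlobularSet} (f : X ⟶ Y), NBijective n f → NBijective n (P.map f)) ∧
    (∀ {X Y : GlobularSet} (f : X ⟶ Y), NBijective n f →
      NBijective n ((P.free.map f).f)) := by
  have hP {X Y : GlobularSet} (f : X ⟶ Y) (hf : NBijective n f) : NBijective n (P.map f) :=
    fun i hi => bijective_snd_of_isPullback ((hκ f).map ((evaluation Globeᵒᵖ Type).obj (op ⟨i⟩)))
      (nBijective_free_map adj hf i hi)
  -- `(P.free.map f).f` is `P.map f` by definition
  exact ⟨hP, hP⟩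

end Statement16
end
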